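/- arXiv:2603.06563 — 5 statements merged into one kernel-verified Lean document; each statement's English description precedes it below -/
import Mathlib

section
/- Let X be an ℝ^{ν₀}-valued random variable on a probability space (Ω, F, P) and let f : ℝ^{ν₀} → ℝ^{d} be Borel measurable. Then there exists a sequence of feedforward neural networks (F_n)_{n∈ℕ} with F_n ∈ Q_n such that for every ε > 0, lim_{n→∞} P(‖F_n(X) − f(X)‖ > ε) = 0. -/
/-!
A single sigmoid unit already approximates an exponential uniformly on half-lines:
`e^M σ(u - M) → e^u` uniformly for `u ≤ R` as `M → ∞`. Hence on a compact set `K` the closed span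
of the ridge functions `σ(a ⬝ x + b)` contains all `exp (a ⬝ x)`, which span a point-separating
subalgebra of `C(K, ℝ)`; by Stone–Weierstrass shallow networks are uniformly dense on compacts.
Tightness, `L¹`-density of continuous functions and truncation then give approximation in measure
of any measurable `f`. For depth `k + 1` the first `k` hidden layers apply `σ` coordinatewise,
an injective continuous map `Ψ`, so `f = g ∘ Ψ` for a measurable `g`, and the last hidden layer
approximates `g` for the push-forward measure. A diagonal choice over the widths finishes.
-/
open Filter MeasureTheory

/-- The sigmoid activation function. -/
noncomputable def sigmoid (z : ℝ) : ℝ := (1 + Real.exp (-z))⁻¹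

/-- A fully connected feedforward neural network with `L` hidden layers of common
width `ν`, input dimension `ν₀` and output dimension `k`: the trainable weights and
biases of each affine layer. -/
structure MLP (L ν ν₀ k : ℕ) where
  w1 : Matrix (Fin ν) (Fin ν₀) ℝ
  b1 : Fin ν → ℝ
  wmid : Fin (L - 1) → Matrix (Fin ν) (Fin ν) ℝ
  bmid : Fin (L - 1) → (Fin ν → ℝ)
  wout : Matrix (Fin k) (Fin ν) ℝ
  bout : Fin k → ℝ

/-- The function computed by an FNN: compositions of affine maps with componentwise
sigmoid activations on the hidden layers, and no activation at the output layer. -/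
noncomputable def MLP.eval {L ν ν₀ k : ℕ} (net : MLP L ν ν₀ k)
    (x : Fin ν₀ → ℝ) : Fin k → ℝ :=
  net.wout.mulVec
    ((List.finRange (L - 1)).foldl
      (fun v i => fun j => sigmoid ((net.wmid i).mulVec v j + net.bmid i j))
      (fun j => sigmoid (net.w1.mulVec x j + net.b1 j)))
    + net.bout

/-- `F` belongs to the class `Q_n` of FNNs with depth `L` and hidden width `ν n`. -/
def InQ (L : ℕ) (ν : ℕ → ℕ) (n ν₀ k : ℕ)
    (F : (Fin ν₀ → ℝ) → (Fin k → ℝ)) : Prop :=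
  ∃ net : MLP L (ν n) ν₀ k, F = net.eval

open Topology
open scoped ENNReal

theorem abs_exp_sub_exp_mul_sigmoid_le (u M : ℝ) :
    |Real.exp u - Real.exp M * sigmoid (u - M)| ≤ Real.exp u ^ 2 * Real.exp (-M) := by
  have hu : Real.exp u = Real.exp M * Real.exp (u - M) := by rw [← Real.exp_add]; ring_nf
  have hσ : sigmoid (u - M) = Real.exp (u - M) / (1 + Real.exp (u - M)) := by
    rw [sigmoid, Real.exp_neg]
    field_simp
    ring
  have ht := Real.exp_pos (u - M)
  have hE := Real.exp_pos M
  rw [hσ, hu, Real.exp_neg]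
  set t := Real.exp (u - M)
  set E := Real.exp M
  have key : E * t - E * (t / (1 + t)) = E * t ^ 2 / (1 + t) := by field_simp; ring
  rw [key, abs_of_nonneg (by positivity), show (E * t) ^ 2 * E⁻¹ = E * t ^ 2 by field_simp]
  exact div_le_self (by positivity) (by linarith)

section StoneWeierstrass

variable {m : ℕ} (K : Set (Fin m → ℝ))

noncomputable def sigmoidRidgeOn (a : Fin m → ℝ) (b : ℝ) : C(K, ℝ) :=
  ⟨fun x => sigmoid (a ⬝ᵥ (x : Fin m → ℝ) + b),
    (continuous_sigmoid : Continuous sigmoid).comp (by fun_prop)⟩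

noncomputable def expRidgeOn (a : Fin m → ℝ) : C(K, ℝ) :=
  ⟨fun x => Real.exp (a ⬝ᵥ (x : Fin m → ℝ)), by fun_prop⟩

def sigmoidSpan : Submodule ℝ C(K, ℝ) :=
  Submodule.span ℝ (Set.range fun p : (Fin m → ℝ) × ℝ => sigmoidRidgeOn K p.1 p.2)

variable {K} [CompactSpace K]

theorem expRidgeOn_mem_topologicalClosure (a : Fin m → ℝ) :
    expRidgeOn K a ∈ (sigmoidSpan K).topologicalClosure := by
  have hlim : Tendsto (fun M : ℝ => Real.exp M • sigmoidRidgeOn K a (-M)) atTop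
      (𝓝 (expRidgeOn K a)) := by
    rw [tendsto_iff_dist_tendsto_zero]
    have hbound : Tendsto (fun M => ‖expRidgeOn K a‖ ^ 2 * Real.exp (-M)) atTop (𝓝 0) := by
      simpa using Real.tendsto_exp_neg_atTop_nhds_zero.const_mul (‖expRidgeOn K a‖ ^ 2)
    refine squeeze_zero (fun _ => dist_nonneg) (fun M => ?_) hbound
    refine (ContinuousMap.dist_le (by positivity)).2 fun x => ?_
    rw [Real.dist_eq, abs_sub_comm]
    calc _ ≤ Real.exp (a ⬝ᵥ (x : Fin m → ℝ)) ^ 2 * Real.exp (-M) :=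
          abs_exp_sub_exp_mul_sigmoid_le _ M
      _ ≤ ‖expRidgeOn K a‖ ^ 2 * Real.exp (-M) := by
          gcongr
          exact (Real.le_norm_self _).trans ((expRidgeOn K a).norm_coe_le_norm x)
  exact (sigmoidSpan K).isClosed_topologicalClosure.mem_of_tendsto hlim
    (Eventually.of_forall fun M => (sigmoidSpan K).le_topologicalClosure
      (Submodule.smul_mem _ _ (Submodule.subset_span ⟨(a, -M), rfl⟩)))

variable (K) in
def expRidgeSubmonoid : Submonoid C(K, ℝ) where
  carrier := Set.range (expRidgeOn K)
  mul_mem' := by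
    rintro _ _ ⟨a, rfl⟩ ⟨b, rfl⟩
    exact ⟨a + b, by ext x; simp [expRidgeOn, add_dotProduct, Real.exp_add]⟩
  one_mem' := ⟨0, by ext; simp [expRidgeOn]⟩

theorem topologicalClosure_sigmoidSpan_eq_top :
    (sigmoidSpan K).topologicalClosure = ⊤ := by
  set A := Algebra.adjoin ℝ (expRidgeSubmonoid K : Set C(K, ℝ))
  have hA : (A : Set C(K, ℝ)) ⊆ (sigmoidSpan K).topologicalClosure := by
    change Subalgebra.toSubmodule A ≤ _
    rw [Algebra.adjoin_eq_span, Submonoid.closure_eq, Submodule.span_le]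
    rintro _ ⟨a, rfl⟩
    exact expRidgeOn_mem_topologicalClosure a
  have hsep : A.SeparatesPoints := by
    intro x y hxy
    obtain ⟨j, hj⟩ : ∃ j, (x : Fin m → ℝ) j ≠ (y : Fin m → ℝ) j := by
      by_contra! h
      exact hxy (Subtype.ext (funext h))
    refine ⟨_, ⟨expRidgeOn K (Pi.single j 1), Algebra.subset_adjoin ⟨_, rfl⟩, rfl⟩, ?_⟩
    simpa [expRidgeOn] using hj
  rw [eq_top_iff]
  intro φ _
  have hφ : φ ∈ closure (A : Set C(K, ℝ)) := by
    rw [← Subalgebra.topologicalClosure_coe,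
      ContinuousMap.subalgebra_topologicalClosure_eq_top_of_separatesPoints A hsep]
    trivial
  exact closure_minimal hA (sigmoidSpan K).isClosed_topologicalClosure hφ

end StoneWeierstrass

section ShallowNets

def shallowNets (m d : ℕ) : Submodule ℝ ((Fin m → ℝ) → Fin d → ℝ) :=
  Submodule.span ℝ (Set.range fun p : (Fin m → ℝ) × ℝ × (Fin d → ℝ) =>
    fun x => sigmoid (p.1 ⬝ᵥ x + p.2.1) • p.2.2)

variable {m d : ℕ} {K : Set (Fin m → ℝ)}

theorem exists_mem_shallowNets_eq_smul {v : C(K, ℝ)} (hv : v ∈ sigmoidSpan K)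
    (c : Fin d → ℝ) : ∃ s ∈ shallowNets m d, ∀ x : K, s x = v x • c := by
  induction hv using Submodule.span_induction with
  | mem _ h =>
    obtain ⟨⟨a, b⟩, rfl⟩ := h
    exact ⟨_, Submodule.subset_span ⟨(a, b, c), rfl⟩, fun x => rfl⟩
  | zero => exact ⟨0, zero_mem _, fun x => by simp⟩
  | add v₁ v₂ _ _ h₁ h₂ =>
    obtain ⟨s₁, hs₁, e₁⟩ := h₁
    obtain ⟨s₂, hs₂, e₂⟩ := h₂
    exact ⟨s₁ + s₂, add_mem hs₁ hs₂, fun x => by simp [e₁, e₂, add_smul]⟩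
  | smul r v _ h =>
    obtain ⟨s, hs, e⟩ := h
    exact ⟨r • s, Submodule.smul_mem _ r hs, fun x => by simp [e, smul_smul]⟩

theorem exists_mem_shallowNets_forall_norm_sub_lt (hK : IsCompact K)
    {g : (Fin m → ℝ) → Fin d → ℝ} (hg : Continuous g) {ε : ℝ} (hε : 0 < ε) :
    ∃ s ∈ shallowNets m d, ∀ x ∈ K, ‖s x - g x‖ < ε := by
  have := isCompact_iff_compactSpace.mp hK
  have hdense (φ : C(K, ℝ)) : φ ∈ closure (sigmoidSpan K : Set C(K, ℝ)) := by
    rw [← Submodule.topologicalClosure_coe, topologicalClosure_sigmoidSpan_eq_top]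
    trivial
  choose v hvK hv using fun i : Fin d =>
    Metric.mem_closure_iff.1 (hdense ⟨fun x => g x i, by fun_prop⟩) ε hε
  choose s hs hsv using fun i => exists_mem_shallowNets_eq_smul (hvK i) (Pi.single i 1)
  refine ⟨∑ i, s i, Submodule.sum_mem _ fun i _ => hs i, fun x hx => ?_⟩
  rw [pi_norm_lt_iff hε]
  intro j
  have hsx : (∑ i, s i) x j = v j ⟨x, hx⟩ := by
    simp [Finset.sum_apply, hsv _ ⟨x, hx⟩, Pi.single_apply]
  rw [Pi.sub_apply, hsx, Real.norm_eq_abs, abs_sub_comm]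
  exact (ContinuousMap.dist_apply_le_dist (⟨x, hx⟩ : K)).trans_lt (hv j)

end ShallowNets

namespace MLP

variable {m d : ℕ}

theorem exists_eval_eq_of_mem_shallowNets {s : (Fin m → ℝ) → Fin d → ℝ}
    (hs : s ∈ shallowNets m d) : ∃ N, ∀ w, N ≤ w → ∃ net : MLP 1 w m d, net.eval = s := by
  obtain ⟨N, c, p, rfl⟩ := Submodule.mem_span_set'.1 hs
  choose q hq using fun n => (p n).2
  refine ⟨N, fun w hw => ?_⟩
  obtain ⟨k, rfl⟩ := Nat.exists_eq_add_of_le hw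
  refine ⟨⟨Fin.append (fun n => (q n).1) 0, Fin.append (fun n => (q n).2.1) 0, 0, 0,
    fun i => Fin.append (fun n => c n * (q n).2.2 i) 0, 0⟩, ?_⟩
  funext x i
  simp [MLP.eval, Matrix.mulVec, dotProduct, Fin.sum_univ_add, ← hq, Finset.sum_apply]
  exact Finset.sum_congr rfl fun n _ => by ring

theorem exists_eval_eq_comp_sigmoid {k w : ℕ} (net : MLP (k + 1) w m d) (h : m ≤ w) :
    ∃ net' : MLP (k + 2) w m d, net'.eval = net.eval ∘ (sigmoid ∘ ·) := by
  obtain ⟨j, rfl⟩ := Nat.exists_eq_add_of_le h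
  -- The new first layer puts `σ (x i)` on unit `i < m`; the old first layer becomes the first
  -- middle layer, reading only those units.
  refine ⟨⟨Matrix.of (Fin.append (fun i => Pi.single i 1) 0), 0,
    Fin.cons (n := k) (α := fun _ => Matrix (Fin (m + j)) (Fin (m + j)) ℝ)
      (Matrix.of fun r => Fin.append (net.w1 r) 0) net.wmid,
    Fin.cons (n := k) net.b1 net.bmid, net.wout, net.bout⟩, ?_⟩
  funext x
  simp only [MLP.eval, Function.comp_apply]
  -- `k + 2 - 1` is `k + 1` only up to unfolding, hence `erw`.
  erw [List.finRange_succ]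
  simp only [List.foldl_cons, List.foldl_map, Fin.cons_zero, Fin.cons_succ]
  congr 3
  funext r
  simp [Matrix.mulVec, dotProduct, Fin.sum_univ_add, Pi.single_apply]

theorem exists_eval_eq_comp_iterate {w : ℕ} (net : MLP 1 w m d) (h : m ≤ w) (k : ℕ) :
    ∃ net' : MLP (k + 1) w m d, net'.eval = net.eval ∘ (sigmoid ∘ ·)^[k] := by
  induction k with
  | zero => exact ⟨net, rfl⟩
  | succ k ih =>
    obtain ⟨net', hnet'⟩ := ih
    obtain ⟨net'', hnet''⟩ := net'.exists_eval_eq_comp_sigmoid h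
    exact ⟨net'', by rw [hnet'', hnet', Function.iterate_succ]; rfl⟩

instance {L w m d : ℕ} : Nonempty (MLP L w m d) := ⟨⟨0, 0, 0, 0, 0, 0⟩⟩

end MLP

section ApproximationInMeasure

variable {α E : Type*} [MeasurableSpace α] [NormedAddCommGroup E] {μ : Measure α}

def ApproximableInMeasure (μ : Measure α) (S : Set (α → E)) (f : α → E) : Prop :=
  ∀ ε : ℝ, 0 < ε → ∃ s ∈ S, μ {x | ε < ‖s x - f x‖} < ENNReal.ofReal ε

theorem ApproximableInMeasure.trans {S T : Set (α → E)} {f : α → E}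
    (hf : ApproximableInMeasure μ T f) (hT : ∀ t ∈ T, ApproximableInMeasure μ S t) :
    ApproximableInMeasure μ S f := by
  intro ε hε
  obtain ⟨t, htT, ht⟩ := hf (ε / 2) (half_pos hε)
  obtain ⟨s, hsS, hs⟩ := hT t htT (ε / 2) (half_pos hε)
  refine ⟨s, hsS, ?_⟩
  have hsub : {x | ε < ‖s x - f x‖} ⊆ {x | ε / 2 < ‖s x - t x‖} ∪ {x | ε / 2 < ‖t x - f x‖} := by
    intro x hx
    by_contra! hx'
    simp only [Set.mem_union, Set.mem_ofPred_eq, not_or, not_lt] at hx hx'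
    linarith [norm_sub_le_norm_sub_add_norm_sub (s x) (t x) (f x)]
  calc μ {x | ε < ‖s x - f x‖}
      ≤ μ {x | ε / 2 < ‖s x - t x‖} + μ {x | ε / 2 < ‖t x - f x‖} :=
        (measure_mono hsub).trans (measure_union_le _ _)
    _ < ENNReal.ofReal (ε / 2) + ENNReal.ofReal (ε / 2) := ENNReal.add_lt_add hs ht
    _ = ENNReal.ofReal ε := by rw [← ENNReal.ofReal_add (by positivity) (by positivity), add_halves]

theorem ApproximableInMeasure.comp_measurable {β : Type*} [MeasurableSpace β] {Ψ : α → β}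
    (hΨ : AEMeasurable Ψ μ) {S : Set (β → E)} {g : β → E}
    (hg : ApproximableInMeasure (μ.map Ψ) S g) :
    ApproximableInMeasure μ ((· ∘ Ψ) '' S) (g ∘ Ψ) := by
  intro ε hε
  obtain ⟨s, hs, hlt⟩ := hg ε hε
  exact ⟨s ∘ Ψ, ⟨s, hs, rfl⟩, (Measure.le_map_apply hΨ _).trans_lt hlt⟩

theorem StronglyMeasurable.approximableInMeasure_integrable [IsFiniteMeasure μ] {f : α → E}
    (hf : StronglyMeasurable f) : ApproximableInMeasure μ {g | Integrable g μ} f := by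
  intro ε hε
  have htail : Tendsto (fun M : ℕ => μ {x | (M : ℝ) < ‖f x‖}) atTop (𝓝 0) := by
    have hempty : ⋂ M : ℕ, {x | (M : ℝ) < ‖f x‖} = ∅ := by
      refine Set.eq_empty_of_forall_notMem fun x hx => ?_
      obtain ⟨M, hM⟩ := exists_nat_ge ‖f x‖
      exact (Set.mem_iInter.1 hx M).not_ge hM
    simpa [Function.comp_def, hempty] using tendsto_measure_iInter_atTop (μ := μ)
      (s := fun M : ℕ => {x | (M : ℝ) < ‖f x‖})
      (fun M => (measurableSet_lt measurable_const hf.norm.measurable).nullMeasurableSet)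
      (fun M N hMN x (hx : (N : ℝ) < ‖f x‖) => show (M : ℝ) < ‖f x‖ from
        (Nat.cast_le.2 hMN).trans_lt hx) ⟨0, measure_ne_top _ _⟩
  obtain ⟨M, hM⟩ := (htail.eventually (gt_mem_nhds (ENNReal.ofReal_pos.2 hε))).exists
  have hmeas : MeasurableSet {x | ‖f x‖ ≤ M} := measurableSet_le hf.norm.measurable measurable_const
  refine ⟨{x | ‖f x‖ ≤ M}.indicator f, ?_, lt_of_le_of_lt (measure_mono fun x hx => ?_) hM⟩
  · refine (integrable_const (M : ℝ)).mono' (hf.indicator hmeas).aestronglyMeasurable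
      (Eventually.of_forall fun x => ?_)
    by_cases hx : ‖f x‖ ≤ M
    · simpa [Set.indicator_of_mem (show x ∈ {x | ‖f x‖ ≤ M} from hx)] using hx
    · simp [Set.indicator_of_notMem (show x ∉ {x | ‖f x‖ ≤ M} from hx)]
  · by_contra hxM
    have : x ∈ {x | ‖f x‖ ≤ M} := show ‖f x‖ ≤ M from not_lt.1 hxM
    simp [Set.indicator_of_mem this, hε.not_gt] at hx

theorem Integrable.approximableInMeasure_continuous [TopologicalSpace α] [NormalSpace α]
    [BorelSpace α] [NormedSpace ℝ E] [μ.WeaklyRegular] {f : α → E} (hf : Integrable f μ) :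
    ApproximableInMeasure μ {g | Continuous g} f := by
  intro ε hε
  obtain ⟨g, hfg, hg⟩ := hf.exists_boundedContinuous_lintegral_sub_le
    (ENNReal.ofReal_pos.2 (by positivity : 0 < ε ^ 2 / 2)).ne'
  refine ⟨g, g.continuous, ?_⟩
  calc μ {x | ε < ‖g x - f x‖}
      ≤ μ {x | ENNReal.ofReal ε ≤ ‖f x - g x‖ₑ} := measure_mono fun x hx => by
        rw [Set.mem_ofPred_eq, ← ofReal_norm, norm_sub_rev]
        exact ENNReal.ofReal_le_ofReal hx.le
    _ ≤ (∫⁻ x, ‖f x - g x‖ₑ ∂μ) / ENNReal.ofReal ε :=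
        meas_ge_le_lintegral_div (hf.sub hg).aestronglyMeasurable.enorm
          (ENNReal.ofReal_pos.2 hε).ne' ENNReal.ofReal_ne_top
    _ ≤ ENNReal.ofReal (ε ^ 2 / 2) / ENNReal.ofReal ε := by gcongr
    _ = ENNReal.ofReal (ε / 2) := by
        rw [← ENNReal.ofReal_div_of_pos hε]
        congr 1
        field_simp
    _ < ENNReal.ofReal ε := (ENNReal.ofReal_lt_ofReal_iff hε).2 (half_lt_self hε)

end ApproximationInMeasure

section Networks

variable {m d : ℕ} {μ : Measure (Fin m → ℝ)} [IsFiniteMeasure μ]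

theorem Continuous.approximableInMeasure_shallowNets {g : (Fin m → ℝ) → Fin d → ℝ}
    (hg : Continuous g) : ApproximableInMeasure μ (shallowNets m d) g := by
  intro ε hε
  obtain ⟨K, -, hK, hμK⟩ := MeasurableSet.univ.exists_isCompact_sdiff_lt (μ := μ)
    (measure_ne_top _ _) (ENNReal.ofReal_pos.2 hε).ne'
  obtain ⟨s, hs, hsK⟩ := exists_mem_shallowNets_forall_norm_sub_lt hK hg hε
  have hsub : {x | ε < ‖s x - g x‖} ⊆ Set.univ \ K :=
    fun x hx => ⟨trivial, fun hxK => lt_asymm hx (hsK x hxK)⟩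
  exact ⟨s, hs, (measure_mono hsub).trans_lt hμK⟩

theorem Measurable.approximableInMeasure_shallowNets {f : (Fin m → ℝ) → Fin d → ℝ}
    (hf : Measurable f) : ApproximableInMeasure μ (shallowNets m d) f :=
  ((StronglyMeasurable.approximableInMeasure_integrable hf.stronglyMeasurable).trans
    fun _ hg => Integrable.approximableInMeasure_continuous hg).trans
    fun _ hg => Continuous.approximableInMeasure_shallowNets hg

theorem eventually_exists_mlp_measure_lt {f : (Fin m → ℝ) → Fin d → ℝ} (hf : Measurable f)
    (k : ℕ) {ε : ℝ} (hε : 0 < ε) :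
    ∀ᶠ w in atTop, ∃ net : MLP (k + 1) w m d,
      μ {x | ε < ‖net.eval x - f x‖} < ENNReal.ofReal ε := by
  set Ψ := (sigmoid ∘ · : (Fin m → ℝ) → Fin m → ℝ)^[k]
  have hΨ : Continuous Ψ := (continuous_pi fun i =>
    (continuous_sigmoid : Continuous sigmoid).comp (continuous_apply i)).iterate k
  have hΨinj : Function.Injective Ψ := (Real.sigmoid_injective.comp_left).iterate k
  obtain ⟨g, hg, rfl⟩ := (hΨ.measurableEmbedding hΨinj).exists_measurable_extend hf fun _ => ⟨0⟩
  obtain ⟨_, ⟨s, hs, rfl⟩, hlt⟩ :=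
    ((hg.approximableInMeasure_shallowNets (μ := μ.map Ψ)).comp_measurable hΨ.aemeasurable) ε hε
  obtain ⟨N, hN⟩ := MLP.exists_eval_eq_of_mem_shallowNets hs
  filter_upwards [eventually_ge_atTop (max N m)] with w hw
  obtain ⟨net₁, rfl⟩ := hN w (le_of_max_le_left hw)
  obtain ⟨net, hnet⟩ := net₁.exists_eval_eq_comp_iterate (le_of_max_le_right hw) k
  exact ⟨net, by rwa [hnet]⟩

end Networks

theorem exists_forall_tendsto_zero_of_eventually {α : ℕ → Type*} [∀ n, Nonempty (α n)]
    (E : ∀ n, α n → ℝ → ℝ≥0∞) (hE : ∀ n a, Antitone (E n a))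
    (h : ∀ ε : ℝ, 0 < ε → ∀ᶠ n in atTop, ∃ a, E n a ε < ENNReal.ofReal ε) :
    ∃ a : ∀ n, α n, ∀ ε : ℝ, 0 < ε → Tendsto (fun n => E n (a n) ε) atTop (𝓝 0) := by
  classical
  set r : ℕ → ℝ := fun j => 1 / (j + 1)
  set good : ℕ → ℕ → Prop := fun n j => ∃ a, E n a (r j) < ENNReal.ofReal (r j)
  -- `J n` is the finest accuracy level `r j`, `j ≤ n`, attained at index `n`.
  set J : ℕ → ℕ := fun n => Nat.findGreatest (good n) n
  have hJ : Tendsto J atTop atTop := tendsto_atTop.2 fun j => by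
    filter_upwards [h (r j) (by positivity), eventually_ge_atTop j] with n hn hjn
    exact Nat.le_findGreatest hjn hn
  have hgood : ∀ᶠ n in atTop, good n (J n) := by
    filter_upwards [h (r 0) (by positivity)] with n hn
    exact Nat.findGreatest_spec (Nat.zero_le n) hn
  refine ⟨fun n => if hn : good n (J n) then hn.choose else Classical.arbitrary _, fun ε hε => ?_⟩
  have hr : Tendsto (fun n => r (J n)) atTop (𝓝 0) :=
    tendsto_one_div_add_atTop_nhds_zero_nat.comp hJ
  have hupper : Tendsto (fun n => ENNReal.ofReal (r (J n))) atTop (𝓝 0) := by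
    simpa using ENNReal.tendsto_ofReal hr
  refine tendsto_of_tendsto_of_tendsto_of_le_of_le' tendsto_const_nhds hupper
    (Eventually.of_forall fun _ => zero_le) ?_
  filter_upwards [hgood, hr.eventually (ge_mem_nhds hε)] with n hn hrε
  rw [dif_pos hn]
  exact (hE n _ hrε).trans hn.choose_spec.le

theorem universal_approximation_random_input_general
    {Ω : Type*} [MeasurableSpace Ω] (P : Measure Ω) [IsProbabilityMeasure P]
    (ν₀ d : ℕ)
    (X : Ω → (Fin ν₀ → ℝ)) (hX : Measurable X)
    (f : (Fin ν₀ → ℝ) → (Fin d → ℝ)) (hf : Measurable f)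
    (L : ℕ) (hL : 1 ≤ L)
    (ν : ℕ → ℕ) (hν' : Tendsto ν atTop atTop) :
    ∃ F : ℕ → ((Fin ν₀ → ℝ) → (Fin d → ℝ)),
      (∀ n, InQ L ν n ν₀ d (F n)) ∧
      ∀ ε : ℝ, 0 < ε →
        Tendsto (fun n => P {ω | ε < ‖F n (X ω) - f (X ω)‖}) atTop (nhds 0) := by
  obtain ⟨k, rfl⟩ := Nat.exists_eq_add_of_le' hL
  obtain ⟨net, hnet⟩ := exists_forall_tendsto_zero_of_eventually
    (fun w (net : MLP (k + 1) w ν₀ d) ε => P.map X {x | ε < ‖net.eval x - f x‖})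
    (fun _ _ _ _ hε => measure_mono fun _ hx => lt_of_le_of_lt hε hx)
    (fun _ hε => eventually_exists_mlp_measure_lt hf k hε)
  refine ⟨fun n => (net (ν n)).eval, fun n => ⟨_, rfl⟩, fun ε hε => ?_⟩
  exact tendsto_of_tendsto_of_tendsto_of_le_of_le tendsto_const_nhds ((hnet ε hε).comp hν')
    (fun _ => zero_le) fun _ => Measure.le_map_apply hX.aemeasurable _

/-- Universal approximation for a random input: for any Borel measurable target `f`
and any random input `X`, there is a sequence of FNNs `F n ∈ Q_n` with
`F n (X) → f (X)` in probability. -/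
theorem universal_approximation_random_input
    {Ω : Type*} [MeasurableSpace Ω] (P : Measure Ω) [IsProbabilityMeasure P]
    (ν₀ d : ℕ)
    (X : Ω → (Fin ν₀ → ℝ)) (hX : Measurable X)
    (f : (Fin ν₀ → ℝ) → (Fin d → ℝ)) (hf : Measurable f)
    (L : ℕ) (hL : 1 ≤ L)
    (ν : ℕ → ℕ) (hν : StrictMono ν) (hν' : Tendsto ν atTop atTop) :
    ∃ F : ℕ → ((Fin ν₀ → ℝ) → (Fin d → ℝ)),
      (∀ n, InQ L ν n ν₀ d (F n)) ∧
      ∀ ε : ℝ, 0 < ε →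
        Tendsto (fun n => P {ω | ε < ‖F n (X ω) - f (X ω)‖}) atTop (nhds 0) :=
  universal_approximation_random_input_general P ν₀ d X hX f hf L hL ν hν'
end

section
/- Let X be an ℝ^{ν₀}-valued random variable, let f : ℝ^{ν₀} → ℝ^{d} and ψ : ℝ^{d} → ℝ^{k} be Borel measurable, let D_ψ := { y ∈ ℝ^{d} : ψ is discontinuous at y } be the discontinuity set of ψ, and assume P(f(X) ∈ D_ψ) = 0. Then there exists a sequence of feedforward neural networks (F_n)_{n∈ℕ} with F_n ∈ Q_n such that for every ε > 0, lim_{n→∞} P(‖ψ(F_n(X)) − ψ(f(X))‖ > ε) = 0. -/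
open Filter MeasureTheory

/-!
Sigmoid networks of any fixed depth approximate continuous functions uniformly on compact sets.
With one hidden layer: the exponentials `x ↦ exp (w ⬝ᵥ x)` span a point-separating subalgebra,
so Stone–Weierstrass applies, and `exp c * σ (t - c) → exp t` as `c → ∞`, uniformly for `t`
bounded above. A deeper network composes a shallower approximation of `g` with a one-layer
approximation of the identity near the range of `g`.

The law of `X` is a tight finite measure, and a measurable `f` is close in measure to a continuous
function (truncate it, approximate in `L¹`, apply Markov's inequality). Hence networks approximate
`f` in probability under that law. Padding with idle units gives width exactly `ν n` once `ν n`
is large enough. Finally, `ψ` preserves convergence in probability because it is continuous at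
`f (X)` almost surely: pass to almost surely convergent subsequences.
-/

open scoped Matrix ENNReal

noncomputable section

def sigmoidLayer {p q : ℕ} (W : Fin p → Fin q → ℝ) (b : Fin p → ℝ) (v : Fin q → ℝ) :
    Fin p → ℝ :=
  fun j => sigmoid (W j ⬝ᵥ v + b j)

theorem continuous_sigmoidLayer {p q : ℕ} (W : Fin p → Fin q → ℝ) (b : Fin p → ℝ) :
    Continuous (sigmoidLayer W b) :=
  continuous_pi fun _ => continuous_sigmoid.comp
    ((continuous_const.dotProduct continuous_id).add continuous_const)

theorem List.continuous_foldl {X β : Type*} [TopologicalSpace X] {f : X → β → X}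
    (hf : ∀ b, Continuous (f · b)) (l : List β) : Continuous (l.foldl f) := by
  induction l with
  | nil => exact continuous_id
  | cons b l ih => exact ih.comp (hf b)

def padZero {α : Type*} [Zero α] {ν ν' : ℕ} (h : ν ≤ ν') (v : Fin ν → α) : Fin ν' → α :=
  Function.extend (Fin.castLE h) v 0

section padZero

variable {α : Type*} [Zero α] {ν ν' : ℕ} (h : ν ≤ ν')

@[simp]
theorem padZero_castLE (v : Fin ν → α) (i : Fin ν) : padZero h v (Fin.castLE h i) = v i :=
  (Fin.castLE_injective h).extend_apply v 0 i

theorem padZero_dotProduct (a : Fin ν → ℝ) (v : Fin ν' → ℝ) :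
    padZero h a ⬝ᵥ v = a ⬝ᵥ (v ∘ Fin.castLE h) :=
  (Fintype.sum_of_injective _ (Fin.castLE_injective h) _ _
    (fun i hi => by simp [padZero, Function.extend_apply' _ _ _ hi])
    (fun i => by simp)).symm

theorem sigmoidLayer_padZero {q : ℕ} (W : Fin ν → Fin q → ℝ) (b : Fin ν → ℝ) (v : Fin q → ℝ) :
    sigmoidLayer (padZero h W) (padZero h b) v ∘ Fin.castLE h = sigmoidLayer W b v := by
  funext i
  simp only [sigmoidLayer, Function.comp_apply, padZero_castLE]

theorem sigmoidLayer_padZero_padZero (W : Fin ν → Fin ν → ℝ) (b : Fin ν → ℝ) (v : Fin ν' → ℝ) :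
    sigmoidLayer (padZero h fun i => padZero h (W i)) (padZero h b) v ∘ Fin.castLE h =
      sigmoidLayer W b (v ∘ Fin.castLE h) := by
  funext i
  simp only [sigmoidLayer, Function.comp_apply, padZero_castLE, padZero_dotProduct]

end padZero

namespace MLP

section Hidden

variable {L ν ν' m k : ℕ}

def hidden (net : MLP L ν m k) (x : Fin m → ℝ) : Fin ν → ℝ :=
  (List.finRange (L - 1)).foldl (fun v i => sigmoidLayer (net.wmid i) (net.bmid i) v)
    (sigmoidLayer net.w1 net.b1 x)

theorem eval_eq_mulVec_hidden (net : MLP L ν m k) (x : Fin m → ℝ) :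
    net.eval x = net.wout *ᵥ net.hidden x + net.bout := rfl

theorem hidden_of_depth_one (net : MLP 1 ν m k) : net.hidden = sigmoidLayer net.w1 net.b1 := rfl

theorem continuous_eval (net : MLP L ν m k) : Continuous net.eval :=
  (continuous_const.matrix_mulVec ((List.continuous_foldl
    (fun i => continuous_sigmoidLayer (net.wmid i) (net.bmid i)) _).comp
      (continuous_sigmoidLayer net.w1 net.b1))).add continuous_const

/-- The added units have zero incoming and outgoing weights: their activation `sigmoid 0` is
never read. -/
def pad (net : MLP L ν m k) (h : ν ≤ ν') : MLP L ν' m k where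
  w1 := padZero h net.w1
  b1 := padZero h net.b1
  wmid t := padZero h fun i => padZero h (net.wmid t i)
  bmid t := padZero h (net.bmid t)
  wout l := padZero h (net.wout l)
  bout := net.bout

theorem hidden_pad (net : MLP L ν m k) (h : ν ≤ ν') (x : Fin m → ℝ) :
    (net.pad h).hidden x ∘ Fin.castLE h = net.hidden x := by
  rw [hidden, hidden, ← sigmoidLayer_padZero h net.w1 net.b1 x]
  exact (List.foldl_hom (· ∘ Fin.castLE h) fun v t =>
    (sigmoidLayer_padZero_padZero h (net.wmid t) (net.bmid t) v).symm).symm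

@[simp]
theorem eval_pad (net : MLP L ν m k) (h : ν ≤ ν') : (net.pad h).eval = net.eval := by
  funext x
  rw [eval_eq_mulVec_hidden, eval_eq_mulVec_hidden, ← hidden_pad net h x]
  exact congrArg (· + net.bout) (funext fun l => padZero_dotProduct h (net.wout l) _)

end Hidden

variable {S ν m p k : ℕ}

/-- No activation sits between `net₁.wout` and `net₂.w1`, so these two affine maps merge into
the new last middle layer. -/
def stack (net₁ : MLP (S + 1) ν m p) (net₂ : MLP 1 ν p k) : MLP (S + 2) ν m k where
  w1 := net₁.w1
  b1 := net₁.b1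
  wmid := Fin.snoc (α := fun _ => Matrix (Fin ν) (Fin ν) ℝ) net₁.wmid (net₂.w1 * net₁.wout)
  bmid := Fin.snoc (α := fun _ => Fin ν → ℝ) net₁.bmid (net₂.w1 *ᵥ net₁.bout + net₂.b1)
  wout := net₂.wout
  bout := net₂.bout

theorem hidden_stack (net₁ : MLP (S + 1) ν m p) (net₂ : MLP 1 ν p k) (x : Fin m → ℝ) :
    (net₁.stack net₂).hidden x = net₂.hidden (net₁.eval x) := by
  change (List.finRange (S + 1)).foldl _ _ = _
  rw [List.finRange_succ_last, List.foldl_append, List.foldl_map]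
  simp only [stack, Fin.snoc_castSucc, Fin.snoc_last, List.foldl_cons, List.foldl_nil]
  change sigmoidLayer (net₂.w1 * net₁.wout) (net₂.w1 *ᵥ net₁.bout + net₂.b1) (net₁.hidden x) = _
  rw [hidden_of_depth_one, eval_eq_mulVec_hidden]
  funext j
  change sigmoid (((net₂.w1 * net₁.wout) *ᵥ net₁.hidden x) j + (net₂.w1 *ᵥ net₁.bout + net₂.b1) j)
    = sigmoid ((net₂.w1 *ᵥ (net₁.wout *ᵥ net₁.hidden x + net₁.bout)) j + net₂.b1 j)
  rw [← Matrix.mulVec_mulVec, Matrix.mulVec_add, Pi.add_apply, Pi.add_apply, add_assoc]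

theorem eval_stack (net₁ : MLP (S + 1) ν m p) (net₂ : MLP 1 ν p k) :
    (net₁.stack net₂).eval = net₂.eval ∘ net₁.eval := by
  funext x
  rw [eval_eq_mulVec_hidden, hidden_stack]
  rfl

end MLP

theorem sigmoid_le_exp (x : ℝ) : sigmoid x ≤ Real.exp x := by
  rw [sigmoid, inv_le_iff_one_le_mul₀ (by positivity), mul_add, mul_one, ← Real.exp_add,
    add_neg_cancel, Real.exp_zero]
  linarith [Real.exp_pos x]

theorem exp_sub_exp_mul_sigmoid (t c : ℝ) :
    Real.exp t - Real.exp c * sigmoid (t - c) = Real.exp t * sigmoid (t - c) := by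
  have hct : Real.exp t * Real.exp (-(t - c)) = Real.exp c := by
    rw [← Real.exp_add]; ring_nf
  rw [sigmoid]
  field_simp
  linarith

theorem abs_exp_mul_sigmoid_sub_exp_le (t c : ℝ) :
    |Real.exp c * sigmoid (t - c) - Real.exp t| ≤ Real.exp (-c) * Real.exp (2 * t) := by
  rw [abs_sub_comm, exp_sub_exp_mul_sigmoid, abs_of_nonneg (by unfold sigmoid; positivity)]
  calc Real.exp t * sigmoid (t - c) ≤ Real.exp t * Real.exp (t - c) := by
        gcongr; exact sigmoid_le_exp _
    _ = Real.exp (-c) * Real.exp (2 * t) := by rw [← Real.exp_add, ← Real.exp_add]; ring_nf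

def sigmoidRidgeSpan (m d : ℕ) : Submodule ℝ ((Fin m → ℝ) → Fin d → ℝ) :=
  Submodule.span ℝ (Set.range fun p : (Fin m → ℝ) × ℝ × (Fin d → ℝ) =>
    fun x => sigmoid (p.1 ⬝ᵥ x + p.2.1) • p.2.2)

section UniformApproximation

variable {m d : ℕ} {K : Set (Fin m → ℝ)}

theorem exists_sum_exp_near (hK : IsCompact K) {g : (Fin m → ℝ) → ℝ} (hg : ContinuousOn g K)
    {ε : ℝ} (hε : 0 < ε) :
    ∃ (n : ℕ) (a : Fin n → ℝ) (w : Fin n → Fin m → ℝ),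
      ∀ x ∈ K, |∑ i, a i * Real.exp (w i ⬝ᵥ x) - g x| < ε := by
  have : CompactSpace K := isCompact_iff_compactSpace.mp hK
  -- `w ↦ (x ↦ exp (w ⬝ᵥ x))` is multiplicative, so the span of its range is a subalgebra
  let e : Multiplicative (Fin m → ℝ) →* C(K, ℝ) :=
    { toFun w := ⟨fun x => Real.exp (w.toAdd ⬝ᵥ x), by fun_prop⟩
      map_one' := by ext; simp
      map_mul' v w := by ext; simp [add_dotProduct, Real.exp_add] }
  have hsep : (Algebra.adjoin ℝ (MonoidHom.mrange e : Set C(K, ℝ))).SeparatesPoints := by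
    intro x y hxy
    obtain ⟨j, hj⟩ := Function.ne_iff.mp (Subtype.coe_ne_coe.mpr hxy)
    refine ⟨_, ⟨e (.ofAdd (Pi.single j 1)), Algebra.subset_adjoin ⟨_, rfl⟩, rfl⟩, ?_⟩
    simpa [e] using hj
  obtain ⟨⟨φ, hφ⟩, hφg⟩ := ContinuousMap.exists_mem_subalgebra_near_continuous_of_separatesPoints
    _ hsep (K.domRestrict g) hg.domRestrict ε hε
  have hspan : φ ∈ Submodule.span ℝ (MonoidHom.mrange e : Set C(K, ℝ)) := by
    rwa [← Algebra.adjoin_eq_span_of_subset ℝ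
      (by rw [Submonoid.closure_eq]; exact Submodule.subset_span)]
  obtain ⟨n, a, gen, rfl⟩ := Submodule.mem_span_set'.mp hspan
  choose w hw using fun i => (gen i).2
  refine ⟨n, a, fun i => (w i).toAdd, fun x hx => ?_⟩
  simpa [← hw, e] using hφg ⟨x, hx⟩

theorem exists_sum_sigmoid_near (hK : IsCompact K) {g : (Fin m → ℝ) → ℝ} (hg : ContinuousOn g K)
    {ε : ℝ} (hε : 0 < ε) :
    ∃ (n : ℕ) (a : Fin n → ℝ) (w : Fin n → Fin m → ℝ) (b : Fin n → ℝ),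
      ∀ x ∈ K, |∑ i, a i * sigmoid (w i ⬝ᵥ x + b i) - g x| < ε := by
  obtain ⟨n, a, w, hexp⟩ := exists_sum_exp_near hK hg (half_pos hε)
  obtain ⟨B, hB⟩ := hK.exists_bound_of_continuousOn
    (f := fun x => ∑ i, |a i| * Real.exp (2 * (w i ⬝ᵥ x))) (by fun_prop)
  obtain ⟨c, hc⟩ := ((Real.tendsto_exp_neg_atTop_nhds_zero.mul_const B).eventually
    (gt_mem_nhds (show 0 * B < ε / 2 by simpa using half_pos hε))).exists
  refine ⟨n, fun i => a i * Real.exp c, w, fun _ => -c, fun x hx => ?_⟩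
  have hsigmoid : |∑ i, a i * Real.exp c * sigmoid (w i ⬝ᵥ x + -c) -
      ∑ i, a i * Real.exp (w i ⬝ᵥ x)| ≤ Real.exp (-c) * B := by
    rw [← Finset.sum_sub_distrib]
    calc _ ≤ ∑ i, |a i| * (Real.exp (-c) * Real.exp (2 * (w i ⬝ᵥ x))) := by
          refine (Finset.abs_sum_le_sum_abs _ _).trans (Finset.sum_le_sum fun i _ => ?_)
          rw [mul_assoc, ← mul_sub, abs_mul, ← sub_eq_add_neg]
          gcongr
          exact abs_exp_mul_sigmoid_sub_exp_le _ _
      _ = Real.exp (-c) * ∑ i, |a i| * Real.exp (2 * (w i ⬝ᵥ x)) := by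
          rw [Finset.mul_sum]; exact Finset.sum_congr rfl fun i _ => by ring
      _ ≤ Real.exp (-c) * B := by
          gcongr; exact (le_abs_self _).trans (hB x hx)
  calc _ ≤ |∑ i, a i * Real.exp c * sigmoid (w i ⬝ᵥ x + -c) - ∑ i, a i * Real.exp (w i ⬝ᵥ x)| +
        |∑ i, a i * Real.exp (w i ⬝ᵥ x) - g x| := abs_sub_le _ _ _
    _ < ε / 2 + ε / 2 := add_lt_add_of_le_of_lt (hsigmoid.trans hc.le) (hexp x hx)
    _ = ε := add_halves ε

theorem exists_mem_sigmoidRidgeSpan_near (hK : IsCompact K) {g : (Fin m → ℝ) → Fin d → ℝ}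
    (hg : ContinuousOn g K) {ε : ℝ} (hε : 0 < ε) :
    ∃ F ∈ sigmoidRidgeSpan m d, ∀ x ∈ K, dist (F x) (g x) < ε := by
  choose n a w b h using fun l =>
    exists_sum_sigmoid_near hK ((continuous_apply l).comp_continuousOn hg) hε
  refine ⟨∑ l, ∑ i, fun x => sigmoid (w l i ⬝ᵥ x + b l i) • Pi.single l (a l i), ?_,
    fun x hx => ?_⟩
  · exact Submodule.sum_mem _ fun l _ => Submodule.sum_mem _ fun i _ =>
      Submodule.subset_span ⟨(w l i, b l i, Pi.single l (a l i)), rfl⟩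
  · refine (dist_pi_lt_iff hε).2 fun l => ?_
    simpa [Finset.sum_apply, Pi.single_apply, Real.dist_eq, mul_comm] using h l x hx

theorem exists_mlp_eval_eq_of_mem_sigmoidRidgeSpan {F : (Fin m → ℝ) → Fin d → ℝ}
    (hF : F ∈ sigmoidRidgeSpan m d) : ∃ (ν : ℕ) (net : MLP 1 ν m d), net.eval = F := by
  obtain ⟨n, c, gen, rfl⟩ := Submodule.mem_span_set'.mp hF
  choose p hp using fun i => (gen i).2
  refine ⟨n, ⟨fun i => (p i).1, fun i => (p i).2.1, Fin.elim0, Fin.elim0,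
    Matrix.of fun l i => c i * (p i).2.2 l, 0⟩, ?_⟩
  funext x l
  simp only [MLP.eval_eq_mulVec_hidden, MLP.hidden_of_depth_one, ← hp]
  simp only [sigmoidLayer, Matrix.mulVec, Matrix.of_apply, Finset.sum_apply, Pi.smul_apply,
    smul_eq_mul, Pi.add_apply, Pi.zero_apply, add_zero, dotProduct]
  exact Finset.sum_congr rfl fun i _ => by ring

theorem exists_mlp_one_near (hK : IsCompact K) {g : (Fin m → ℝ) → Fin d → ℝ}
    (hg : ContinuousOn g K) {ε : ℝ} (hε : 0 < ε) :
    ∃ (ν : ℕ) (net : MLP 1 ν m d), ∀ x ∈ K, dist (net.eval x) (g x) < ε := by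
  obtain ⟨F, hF, hFg⟩ := exists_mem_sigmoidRidgeSpan_near hK hg hε
  obtain ⟨ν, net, rfl⟩ := exists_mlp_eval_eq_of_mem_sigmoidRidgeSpan hF
  exact ⟨ν, net, hFg⟩

theorem exists_mlp_near (S : ℕ) (hK : IsCompact K) {g : (Fin m → ℝ) → Fin d → ℝ}
    (hg : ContinuousOn g K) {ε : ℝ} (hε : 0 < ε) :
    ∃ (ν : ℕ) (net : MLP (S + 1) ν m d), ∀ x ∈ K, dist (net.eval x) (g x) < ε := by
  induction S generalizing ε with
  | zero => exact exists_mlp_one_near hK hg hε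
  | succ S ih =>
    -- approximate `g` one layer less deep, then approximate the identity near `g '' K`
    obtain ⟨ν₁, net₁, h₁⟩ := ih (lt_min (half_pos hε) one_pos)
    obtain ⟨ν₂, net₂, h₂⟩ := exists_mlp_one_near (hK.image_of_continuousOn hg).cthickening
      (continuousOn_id (s := Metric.cthickening 1 (g '' K))) (half_pos hε)
    refine ⟨max ν₁ ν₂, (net₁.pad (le_max_left _ _)).stack (net₂.pad (le_max_right _ _)),
      fun x hx => ?_⟩
    have hnear := h₁ x hx
    have hmem : net₁.eval x ∈ Metric.cthickening 1 (g '' K) :=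
      Metric.mem_cthickening_of_dist_le _ _ _ _ (Set.mem_image_of_mem g hx)
        (hnear.le.trans (min_le_right _ _))
    rw [MLP.eval_stack, MLP.eval_pad, MLP.eval_pad]
    calc dist (net₂.eval (net₁.eval x)) (g x)
        ≤ dist (net₂.eval (net₁.eval x)) (net₁.eval x) + dist (net₁.eval x) (g x) :=
          dist_triangle _ _ _
      _ < ε / 2 + ε / 2 := add_lt_add (h₂ _ hmem) (hnear.trans_le (min_le_left _ _))
      _ = ε := add_halves ε

end UniformApproximation

theorem measure_add_le_dist_le {α E : Type*} [MeasurableSpace α] [PseudoMetricSpace E]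
    (μ : Measure α) (f g h : α → E) (ε₁ ε₂ : ℝ) :
    μ {x | ε₁ + ε₂ ≤ dist (f x) (h x)} ≤
      μ {x | ε₁ ≤ dist (f x) (g x)} + μ {x | ε₂ ≤ dist (g x) (h x)} := by
  refine (measure_mono fun x (hx : ε₁ + ε₂ ≤ _) => ?_).trans (measure_union_le _ _)
  by_contra hc
  simp only [Set.mem_union, Set.mem_ofPred_eq, not_or, not_le] at hc
  linarith [dist_triangle (f x) (g x) (h x)]

section ContinuousApproximation

variable {α E : Type*} [TopologicalSpace α] [NormalSpace α] [MeasurableSpace α] [BorelSpace α]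
  [NormedAddCommGroup E] [NormedSpace ℝ E] {μ : Measure α} [μ.WeaklyRegular]
  {f : α → E} {ε : ℝ} {η : ℝ≥0∞}

theorem MeasureTheory.MemLp.exists_continuous_measure_le_dist_le (hf : MemLp f 1 μ)
    (hε : 0 < ε) (hη : η ≠ 0) :
    ∃ g : α → E, Continuous g ∧ μ {x | ε ≤ dist (g x) (f x)} ≤ η := by
  have hε' : ENNReal.ofReal ε ≠ 0 := (ENNReal.ofReal_pos.2 hε).ne'
  obtain ⟨g, hfg, hg⟩ :=
    hf.exists_boundedContinuous_eLpNorm_sub_le ENNReal.one_ne_top (mul_ne_zero hε' hη)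
  refine ⟨g, g.continuous, ?_⟩
  have markov := mul_meas_ge_le_pow_eLpNorm' μ one_ne_zero ENNReal.one_ne_top
    (hf.sub hg).aestronglyMeasurable (ENNReal.ofReal ε)
  simp only [ENNReal.toReal_one, ENNReal.rpow_one] at markov
  calc μ {x | ε ≤ dist (g x) (f x)} ≤ μ {x | ENNReal.ofReal ε ≤ ‖(f - g) x‖ₑ} := by
        refine measure_mono fun x (hx : ε ≤ _) => ?_
        rw [Set.mem_ofPred_eq, Pi.sub_apply, ← edist_eq_enorm_sub, edist_dist, dist_comm]
        exact ENNReal.ofReal_le_ofReal hx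
    _ ≤ η := (ENNReal.mul_le_mul_iff_right hε' ENNReal.ofReal_ne_top).1 (markov.trans hfg)

theorem MeasureTheory.StronglyMeasurable.exists_continuous_measure_le_dist_le
    [IsFiniteMeasure μ] (hf : StronglyMeasurable f) (hε : 0 < ε) (hη : η ≠ 0) :
    ∃ g : α → E, Continuous g ∧ μ {x | ε ≤ dist (g x) (f x)} ≤ η := by
  let trunc : ℕ → α → E := fun M => {x | ‖f x‖ ≤ M}.indicator f
  have htrunc : ∀ M, StronglyMeasurable (trunc M) := fun M =>
    hf.indicator (_root_.measurableSet_le hf.norm.measurable measurable_const)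
  have hlim : TendstoInMeasure μ trunc atTop f :=
    tendstoInMeasure_of_tendsto_ae (fun M => (htrunc M).aestronglyMeasurable) <| ae_of_all _
      fun x => tendsto_const_nhds.congr' <| (eventually_ge_atTop ⌈‖f x‖⌉₊).mono
        fun M hM => (Set.indicator_of_mem (s := {x | ‖f x‖ ≤ M}) (Nat.ceil_le.1 hM) f).symm
  obtain ⟨M, hM⟩ := ((tendstoInMeasure_iff_dist.1 hlim (ε / 2) (half_pos hε)).eventually
    (ge_mem_nhds (ENNReal.half_pos hη))).exists
  have hbound : MemLp (trunc M) 1 μ := MemLp.of_bound (htrunc M).aestronglyMeasurable M <|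
    ae_of_all _ fun x => (norm_indicator_eq_indicator_norm f x).trans_le
      (Set.indicator_apply_le' id fun _ => M.cast_nonneg)
  obtain ⟨g, hg, hgM⟩ :=
    hbound.exists_continuous_measure_le_dist_le (half_pos hε) (ENNReal.half_pos hη).ne'
  refine ⟨g, hg, ?_⟩
  calc μ {x | ε ≤ dist (g x) (f x)}
      ≤ μ {x | ε / 2 ≤ dist (g x) (trunc M x)} + μ {x | ε / 2 ≤ dist (trunc M x) (f x)} := by
        simpa only [add_halves] using measure_add_le_dist_le μ g (trunc M) f (ε / 2) (ε / 2)
    _ ≤ η / 2 + η / 2 := add_le_add hgM hM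
    _ = η := ENNReal.add_halves η

end ContinuousApproximation

theorem exists_mlp_measure_le_dist_le (S : ℕ) {m d : ℕ} (μ : Measure (Fin m → ℝ))
    [IsFiniteMeasure μ] {f : (Fin m → ℝ) → Fin d → ℝ} (hf : Measurable f) {ε : ℝ} (hε : 0 < ε)
    {η : ℝ≥0∞} (hη : η ≠ 0) :
    ∃ (ν : ℕ) (net : MLP (S + 1) ν m d), μ {x | ε ≤ dist (net.eval x) (f x)} ≤ η := by
  obtain ⟨g, hg, hgf⟩ := hf.stronglyMeasurable.exists_continuous_measure_le_dist_le
    (μ := μ) (half_pos hε) (ENNReal.half_pos hη).ne'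
  obtain ⟨K, hK, hμK⟩ := isTightMeasureSet_iff_exists_isCompact_measure_compl_le.1
    (isTightMeasureSet_singleton (μ := μ)) (η / 2) (ENNReal.half_pos hη)
  obtain ⟨ν, net, hnet⟩ := exists_mlp_near S hK hg.continuousOn (half_pos hε)
  refine ⟨ν, net, ?_⟩
  calc μ {x | ε ≤ dist (net.eval x) (f x)}
      ≤ μ {x | ε / 2 ≤ dist (net.eval x) (g x)} + μ {x | ε / 2 ≤ dist (g x) (f x)} := by
        simpa only [add_halves] using measure_add_le_dist_le μ net.eval g f (ε / 2) (ε / 2)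
    _ ≤ μ Kᶜ + η / 2 := add_le_add (measure_mono fun x hx hxK => (hnet x hxK).not_ge hx) hgf
    _ ≤ η / 2 + η / 2 := add_le_add_left (hμK μ rfl) _
    _ = η := ENNReal.add_halves η

theorem exists_seq_tendstoInMeasure_of_forall_exists {α E : Type*} [MeasurableSpace α]
    [PseudoMetricSpace E] {μ : Measure α} {P : (α → E) → Prop} {f : α → E}
    (h : ∀ ε : ℝ, 0 < ε → ∀ η : ℝ≥0∞, η ≠ 0 → ∃ F, P F ∧ μ {x | ε ≤ dist (F x) (f x)} ≤ η) :
    ∃ F : ℕ → α → E, (∀ j, P (F j)) ∧ TendstoInMeasure μ F atTop f := by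
  choose F hP hF using fun j : ℕ =>
    h (1 / (j + 1)) Nat.one_div_pos_of_nat ((j + 1 : ℕ) : ℝ≥0∞)⁻¹
      (ENNReal.inv_ne_zero.2 (ENNReal.natCast_ne_top _))
  refine ⟨F, hP, tendstoInMeasure_iff_dist.2 fun ε hε => ?_⟩
  refine tendsto_of_tendsto_of_tendsto_of_le_of_le' tendsto_const_nhds
    (ENNReal.tendsto_inv_nat_nhds_zero.comp (tendsto_add_atTop_nat 1))
    (Eventually.of_forall fun _ => zero_le) ?_
  filter_upwards [tendsto_one_div_add_atTop_nhds_zero_nat.eventually (ge_mem_nhds hε)] with j hj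
  exact (measure_mono fun x hx => hj.trans hx).trans (hF j)

theorem exists_tendsto_atTop_eventually {A : ℕ → ℕ → Prop} (h : ∀ j, ∀ᶠ n in atTop, A j n) :
    ∃ j : ℕ → ℕ, Tendsto j atTop atTop ∧ ∀ᶠ n in atTop, A (j n) n := by
  classical
  refine ⟨fun n => Nat.findGreatest (A · n) n, tendsto_atTop.2 fun J => ?_, ?_⟩
  · filter_upwards [h J, eventually_ge_atTop J] with n hA hn using Nat.le_findGreatest hn hA
  · filter_upwards [h 0] with n hA using Nat.findGreatest_spec (P := (A · n)) n.zero_le hA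

theorem exists_inQ_tendstoInMeasure {L m d : ℕ} (hL : 1 ≤ L) {ν : ℕ → ℕ}
    (hν : Tendsto ν atTop atTop) (μ : Measure (Fin m → ℝ)) [IsFiniteMeasure μ]
    {f : (Fin m → ℝ) → Fin d → ℝ} (hf : Measurable f) :
    ∃ F : ℕ → (Fin m → ℝ) → Fin d → ℝ,
      (∀ n, InQ L ν n m d (F n)) ∧ TendstoInMeasure μ F atTop f := by
  obtain ⟨S, rfl⟩ : ∃ S, L = S + 1 := ⟨L - 1, by omega⟩
  obtain ⟨G, hGnet, hG⟩ := exists_seq_tendstoInMeasure_of_forall_exists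
    (P := fun G => ∃ (ν : ℕ) (net : MLP (S + 1) ν m d), net.eval = G) fun ε hε η hη => by
      obtain ⟨ν, net, h⟩ := exists_mlp_measure_le_dist_le S μ hf hε hη
      exact ⟨_, ⟨ν, net, rfl⟩, h⟩
  choose u net hnet using hGnet
  -- reindex so that the `j n`-th network fits into width `ν n` for all large `n`
  obtain ⟨j, hj, hfit⟩ := exists_tendsto_atTop_eventually fun J => hν.eventually_ge_atTop (u J)
  have : ∀ n, ∃ F, InQ (S + 1) ν n m d F ∧ (u (j n) ≤ ν n → F = G (j n)) := fun n => by
    by_cases h : u (j n) ≤ ν n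
    · exact ⟨_, ⟨(net (j n)).pad h, rfl⟩, fun _ => by rw [MLP.eval_pad, hnet]⟩
    · exact ⟨_, ⟨⟨0, 0, 0, 0, 0, 0⟩, rfl⟩, fun h' => absurd h' h⟩
  choose F hFQ hFG using this
  exact ⟨F, hFQ, (hG.comp hj).congr'
    (hfit.mono fun n hn => EventuallyEq.of_eq (hFG n hn).symm) EventuallyEq.rfl⟩

namespace MeasureTheory.TendstoInMeasure

variable {Ω α E : Type*} [MeasurableSpace Ω] [MeasurableSpace α] {P : Measure Ω}

theorem comp_of_map [EDist E] {ι : Type*} {l : Filter ι} {F : ι → α → E} {g : α → E}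
    {X : Ω → α} (hX : AEMeasurable X P) (h : TendstoInMeasure (P.map X) F l g) :
    TendstoInMeasure P (fun i => F i ∘ X) l (g ∘ X) := fun ε hε =>
  tendsto_of_tendsto_of_tendsto_of_le_of_le tendsto_const_nhds (h ε hε)
    (fun _ => zero_le) fun _ => Measure.le_map_apply hX _

theorem comp_of_ae_continuousAt [PseudoEMetricSpace E] {F : Type*} [PseudoEMetricSpace F]
    [IsFiniteMeasure P] {Y : ℕ → Ω → E} {Z : Ω → E} (h : TendstoInMeasure P Y atTop Z)
    {ψ : E → F} (hψ : ∀ᵐ ω ∂P, ContinuousAt ψ (Z ω))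
    (hmeas : ∀ n, AEStronglyMeasurable (ψ ∘ Y n) P) :
    TendstoInMeasure P (fun n => ψ ∘ Y n) atTop (ψ ∘ Z) := by
  rw [exists_seq_tendstoInMeasure_atTop_iff hmeas]
  intro ns hns
  obtain ⟨ns', hns', hae⟩ := (h.comp hns.tendsto_atTop).exists_seq_tendsto_ae
  exact ⟨ns', hns', by filter_upwards [hae, hψ] with ω hω hψω using hψω.tendsto.comp hω⟩

end MeasureTheory.TendstoInMeasure

end

theorem nn_composition_as_continuous_general
    {Ω : Type*} [MeasurableSpace Ω] (P : Measure Ω) [IsProbabilityMeasure P]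
    (ν₀ d k : ℕ)
    (X : Ω → (Fin ν₀ → ℝ)) (hX : Measurable X)
    (f : (Fin ν₀ → ℝ) → (Fin d → ℝ)) (hf : Measurable f)
    (ψ : (Fin d → ℝ) → (Fin k → ℝ)) (hψ : Measurable ψ)
    (hD : P {ω | f (X ω) ∈ {y : Fin d → ℝ | ¬ ContinuousAt ψ y}} = 0)
    (L : ℕ) (hL : 1 ≤ L)
    (ν : ℕ → ℕ) (hν' : Tendsto ν atTop atTop) :
    ∃ F : ℕ → ((Fin ν₀ → ℝ) → (Fin d → ℝ)),
      (∀ n, InQ L ν n ν₀ d (F n)) ∧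
      ∀ ε : ℝ, 0 < ε →
        Tendsto (fun n => P {ω | ε < ‖ψ (F n (X ω)) - ψ (f (X ω))‖}) atTop (nhds 0) := by
  obtain ⟨F, hFQ, hF⟩ := exists_inQ_tendstoInMeasure hL hν' (P.map X) hf
  have hψF : ∀ n, AEStronglyMeasurable (ψ ∘ (F n ∘ X)) P := fun n => by
    obtain ⟨net, hnet⟩ := hFQ n
    rw [hnet]
    exact (hψ.comp (net.continuous_eval.measurable.comp hX)).aestronglyMeasurable
  have hlim := (hF.comp_of_map hX.aemeasurable).comp_of_ae_continuousAt (ae_iff.2 hD) hψF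
  refine ⟨F, hFQ, fun ε hε => ?_⟩
  refine tendsto_of_tendsto_of_tendsto_of_le_of_le tendsto_const_nhds
    (tendstoInMeasure_iff_norm.1 hlim ε hε) (fun _ => zero_le) fun n => measure_mono ?_
  exact fun ω (hω : ε < _) => hω.le

/-- Composition with a.s.-continuous maps: if `ψ` is continuous at `f (X)` almost
surely, then there are FNNs `F n ∈ Q_n` with `ψ (F n (X)) → ψ (f (X))` in
probability. -/
theorem nn_composition_as_continuous
    {Ω : Type*} [MeasurableSpace Ω] (P : Measure Ω) [IsProbabilityMeasure P]
    (ν₀ d k : ℕ)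
    (X : Ω → (Fin ν₀ → ℝ)) (hX : Measurable X)
    (f : (Fin ν₀ → ℝ) → (Fin d → ℝ)) (hf : Measurable f)
    (ψ : (Fin d → ℝ) → (Fin k → ℝ)) (hψ : Measurable ψ)
    (hD : P {ω | f (X ω) ∈ {y : Fin d → ℝ | ¬ ContinuousAt ψ y}} = 0)
    (L : ℕ) (hL : 1 ≤ L)
    (ν : ℕ → ℕ) (hν : StrictMono ν) (hν' : Tendsto ν atTop atTop) :
    ∃ F : ℕ → ((Fin ν₀ → ℝ) → (Fin d → ℝ)),
      (∀ n, InQ L ν n ν₀ d (F n)) ∧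
      ∀ ε : ℝ, 0 < ε →
        Tendsto (fun n => P {ω | ε < ‖ψ (F n (X ω)) - ψ (f (X ω))‖}) atTop (nhds 0) :=
  nn_composition_as_continuous_general P ν₀ d k X hX f hf ψ hψ hD L hL ν hν'
end

section
/- Let w_min < w_max be real numbers, and let (W_n)_{n∈ℕ} and W* be random variables taking values in [w_min, w_max] almost surely, with W_n → W* in probability. Let μ denote the law of W*. Let g : [w_min, w_max] → ℝ be Borel measurable with discontinuity set D := { w ∈ [w_min, w_max] : g is discontinuous at w }, and assume μ(D) = 0. Let (g_n)_{n∈ℕ} be Borel measurable functions on [w_min, w_max] and suppose there exist open sets (U_j)_{j∈ℕ} in ℝ with D ⊆ U_j, μ(U_j) < 1/j, μ(∂U_j) = 0, and such that for every j, sup_{w ∈ [w_min, w_max] \ U_j} |g_n(w) − g(w)| → 0 as n → ∞. Then g_n(W_n) → g(W*) in probability. -/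
/-!
Fix `j` and let `K = [w_min, w_max] \ U j`. It is compact and avoids the discontinuity set,
so `g` is uniformly continuous on `K`; together with uniform convergence this makes
`|g n x - g y|` small for all close `x, y ∈ K` once `n` is large. Hence
`|g n (W n) - g W*| > ε` forces either `W n` far from `W*`, which has vanishing probability,
or `W*` in a thin closed neighbourhood of `U j`, whose probability tends to
`μ (closure (U j)) = μ (U j) < 1 / (j + 1)` as the neighbourhood shrinks, since
`μ (∂ U j) = 0`.
-/

open Filter MeasureTheory ENNReal Metric Topology

theorem exists_pos_measure_cthickening_lt {α : Type*} [PseudoMetricSpace α] [MeasurableSpace α]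
    [OpensMeasurableSpace α] {μ : Measure α} [IsFiniteMeasure μ] {s : Set α} {c : ℝ≥0∞}
    (h : μ (closure s) < c) : ∃ η > 0, μ (cthickening η s) < c := by
  have hlim := (tendsto_measure_cthickening (μ := μ) (s := s)
    ⟨1, one_pos, measure_ne_top _ _⟩).mono_left (nhdsWithin_le_nhds (s := Set.Ioi 0))
  obtain ⟨η, hη, hηpos⟩ := ((hlim.eventually_lt_const h).and self_mem_nhdsWithin).exists
  exact ⟨η, hηpos, hη⟩

theorem TendstoUniformlyOn.exists_pos_eventually_dist_lt {ι β γ : Type*} [PseudoMetricSpace β]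
    [PseudoMetricSpace γ] {l : Filter ι} {F : ι → β → γ} {f : β → γ} {K : Set β}
    (hF : TendstoUniformlyOn F f l K) (hf : UniformContinuousOn f K) {ε : ℝ} (hε : 0 < ε) :
    ∃ η > 0, ∀ᶠ n in l, ∀ x ∈ K, ∀ y ∈ K, dist x y < η → dist (F n x) (f y) < ε := by
  obtain ⟨η, hηpos, hη⟩ := Metric.uniformContinuousOn_iff.mp hf (ε / 2) (half_pos hε)
  refine ⟨η, hηpos, ?_⟩
  filter_upwards [Metric.tendstoUniformlyOn_iff.mp hF (ε / 2) (half_pos hε)] with n hn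
  intro x hx y hy hxy
  calc dist (F n x) (f y) ≤ dist (f x) (F n x) + dist (f x) (f y) := dist_triangle_left _ _ _
    _ < ε / 2 + ε / 2 := add_lt_add (hn x hx) (hη x hx y hy hxy)
    _ = ε := add_halves ε

section

variable {Ω E F ι : Type*} [MeasurableSpace Ω] {P : Measure Ω} [IsFiniteMeasure P]
  [PseudoMetricSpace E] [MeasurableSpace E] [OpensMeasurableSpace E] [PseudoMetricSpace F]
  {l : Filter ι} {Xn : ι → Ω → E} {X : Ω → E} {I s : Set E} {gn : ι → E → F} {g : E → F}

theorem eventually_measure_dist_comp_lt (hX : Measurable X)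
    (hXnI : ∀ n, ∀ᵐ ω ∂P, Xn n ω ∈ I) (hXI : ∀ᵐ ω ∂P, X ω ∈ I)
    (hconv : ∀ η > 0, Tendsto (fun n => P {ω | η < dist (Xn n ω) (X ω)}) l (𝓝 0))
    (hg : UniformContinuousOn g (I \ s)) (hgn : TendstoUniformlyOn gn g l (I \ s))
    {δ : ℝ≥0∞} (hδ : P.map X (closure s) < δ) {ε : ℝ} (hε : 0 < ε) :
    ∀ᶠ n in l, P {ω | ε < dist (gn n (Xn n ω)) (g (X ω))} < δ := by
  obtain ⟨c, hsc, hcδ⟩ := exists_between hδ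
  obtain ⟨η₁, hη₁, hthick⟩ := exists_pos_measure_cthickening_lt hsc
  obtain ⟨η₂, hη₂, hclose⟩ := hgn.exists_pos_eventually_dist_lt hg hε
  set η := min η₁ (η₂ / 2)
  have hfar : ∀ᶠ n in l, P {ω | η < dist (Xn n ω) (X ω)} < δ - c :=
    (hconv _ (by positivity)).eventually_lt_const (tsub_pos_of_lt hcδ)
  filter_upwards [hfar, hclose] with n hfar_n hclose_n
  have hbad : ({ω | ε < dist (gn n (Xn n ω)) (g (X ω))} : Set Ω)
      ≤ᵐ[P] (X ⁻¹' cthickening η₁ s ∪ {ω | η < dist (Xn n ω) (X ω)} : Set Ω) := by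
    filter_upwards [hXnI n, hXI] with ω hXnω hXω (hω : ε < _)
    by_cases hXthick : X ω ∈ cthickening η₁ s
    · exact Or.inl hXthick
    refine Or.inr (show η < _ from ?_)
    by_contra! hnear
    have hXnK : Xn n ω ∈ I \ s := ⟨hXnω, fun hs => hXthick <| mem_cthickening_of_dist_le _ _ _ _ hs
      (by rw [dist_comm]; exact hnear.trans (min_le_left _ _))⟩
    have hXK : X ω ∈ I \ s := ⟨hXω, fun hs => hXthick (self_subset_cthickening s hs)⟩
    have hdist : dist (Xn n ω) (X ω) < η₂ :=
      hnear.trans_lt ((min_le_right _ _).trans_lt (half_lt_self hη₂))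
    exact (hclose_n _ hXnK _ hXK hdist).not_ge hω.le
  calc P {ω | ε < dist (gn n (Xn n ω)) (g (X ω))}
      ≤ P (X ⁻¹' cthickening η₁ s) + P {ω | η < dist (Xn n ω) (X ω)} :=
        (measure_mono_ae hbad).trans (measure_union_le _ _)
    _ < c + (δ - c) :=
        ENNReal.add_lt_add ((Measure.le_map_apply hX.aemeasurable _).trans_lt hthick) hfar_n
    _ = δ := add_tsub_cancel_of_le hcδ.le

end

theorem moving_input_stability_scalar_general
    {Ω : Type*} [MeasurableSpace Ω] (P : Measure Ω) [IsProbabilityMeasure P]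
    (wmin wmax : ℝ)
    (Wn : ℕ → Ω → ℝ)
    (Wstar : Ω → ℝ) (hWstar : Measurable Wstar)
    (hWnmem : ∀ n, ∀ᵐ ω ∂P, Wn n ω ∈ Set.Icc wmin wmax)
    (hWsmem : ∀ᵐ ω ∂P, Wstar ω ∈ Set.Icc wmin wmax)
    (hconv : ∀ ε : ℝ, 0 < ε →
      Tendsto (fun n => P {ω | ε < |Wn n ω - Wstar ω|}) atTop (nhds 0))
    (g : ℝ → ℝ)
    (D : Set ℝ)
    (hD : D = {w ∈ Set.Icc wmin wmax | ¬ ContinuousWithinAt g (Set.Icc wmin wmax) w})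
    (gn : ℕ → ℝ → ℝ)
    (U : ℕ → Set ℝ)
    (hUopen : ∀ j, IsOpen (U j))
    (hUD : ∀ j, D ⊆ U j)
    (hUsmall : ∀ j : ℕ, P.map Wstar (U j) < 1 / ((j : ℝ≥0∞) + 1))
    (hUbd : ∀ j, P.map Wstar (frontier (U j)) = 0)
    (hunif : ∀ j, TendstoUniformlyOn gn g atTop (Set.Icc wmin wmax \ U j)) :
    ∀ ε : ℝ, 0 < ε →
      Tendsto (fun n => P {ω | ε < |gn n (Wn n ω) - g (Wstar ω)|}) atTop (nhds 0) := by
  intro ε hε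
  refine ENNReal.tendsto_nhds_zero.mpr fun δ hδ => ?_
  obtain ⟨j, hj⟩ := ENNReal.exists_inv_nat_lt hδ.ne'
  have hcont : ContinuousOn g (Set.Icc wmin wmax \ U j) := fun w hw =>
    (not_not.mp fun hdisc => hw.2 (hUD j (hD ▸ ⟨hw.1, hdisc⟩))).mono Set.sdiff_subset
  have hclosure : P.map Wstar (closure (U j)) < δ := calc
    P.map Wstar (closure (U j)) = P.map Wstar (U j) := measure_closure_of_null_frontier (hUbd j)
    _ < 1 / ((j : ℝ≥0∞) + 1) := hUsmall j
    _ ≤ (j : ℝ≥0∞)⁻¹ := by rw [one_div]; exact ENNReal.inv_le_inv.mpr le_self_add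
    _ < δ := hj
  simp only [← Real.dist_eq] at hconv ⊢
  filter_upwards [eventually_measure_dist_comp_lt hWstar hWnmem hWsmem hconv
    ((isCompact_Icc.diff (hUopen j)).uniformContinuousOn_of_continuous hcont) (hunif j)
    hclosure hε] with n hn using hn.le

/-- Moving-input stability (scalar case): if `W n → W*` in probability, the
discontinuity set `D` of `g` on `[w_min, w_max]` is null under the law `μ` of `W*`,
and `g n → g` uniformly on the complements `[w_min, w_max] \ U j` of open sets
`U j ⊇ D` with `μ (U j) < 1/j` and `μ (∂ U j) = 0`, then
`g n (W n) → g (W*)` in probability. -/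
theorem moving_input_stability_scalar
    {Ω : Type*} [MeasurableSpace Ω] (P : Measure Ω) [IsProbabilityMeasure P]
    (wmin wmax : ℝ) (hw : wmin < wmax)
    (Wn : ℕ → Ω → ℝ) (hWn : ∀ n, Measurable (Wn n))
    (Wstar : Ω → ℝ) (hWstar : Measurable Wstar)
    (hWnmem : ∀ n, ∀ᵐ ω ∂P, Wn n ω ∈ Set.Icc wmin wmax)
    (hWsmem : ∀ᵐ ω ∂P, Wstar ω ∈ Set.Icc wmin wmax)
    (hconv : ∀ ε : ℝ, 0 < ε →
      Tendsto (fun n => P {ω | ε < |Wn n ω - Wstar ω|}) atTop (nhds 0))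
    (g : ℝ → ℝ) (hg : Measurable g)
    (D : Set ℝ)
    (hD : D = {w ∈ Set.Icc wmin wmax | ¬ ContinuousWithinAt g (Set.Icc wmin wmax) w})
    (hDnull : P.map Wstar D = 0)
    (gn : ℕ → ℝ → ℝ) (hgn : ∀ n, Measurable (gn n))
    (U : ℕ → Set ℝ)
    (hUopen : ∀ j, IsOpen (U j))
    (hUD : ∀ j, D ⊆ U j)
    (hUsmall : ∀ j : ℕ, P.map Wstar (U j) < 1 / ((j : ℝ≥0∞) + 1))
    (hUbd : ∀ j, P.map Wstar (frontier (U j)) = 0)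
    (hunif : ∀ j, TendstoUniformlyOn gn g atTop (Set.Icc wmin wmax \ U j)) :
    ∀ ε : ℝ, 0 < ε →
      Tendsto (fun n => P {ω | ε < |gn n (Wn n ω) - g (Wstar ω)|}) atTop (nhds 0) :=
  moving_input_stability_scalar_general P wmin wmax Wn Wstar hWstar hWnmem hWsmem hconv g D hD gn U
    hUopen hUD hUsmall hUbd hunif
end

section
/- Let w_min < w_max be real numbers, and let (W_n)_{n∈ℕ} and W* be random variables taking values in [w_min, w_max] almost surely, with W_n → W* in probability. Let μ denote the law of W*. Let g : [w_min, w_max] → ℝ^{d} be Borel measurable with discontinuity set D := { w ∈ [w_min, w_max] : g is discontinuous at w }, and assume μ(D) = 0. Let (g_n)_{n∈ℕ} be Borel measurable functions from [w_min, w_max] to ℝ^{d} and suppose there exist open sets (U_j)_{j∈ℕ} in ℝ with D ⊆ U_j, μ(U_j) < 1/j, μ(∂U_j) = 0, and such that for every j, sup_{w ∈ [w_min, w_max] \ U_j} ‖g_n(w) − g(w)‖ → 0 as n → ∞. Then g_n(W_n) → g(W*) in probability, i.e., for every ε > 0, P(‖g_n(W_n) − g(W*)‖ > ε) → 0. -/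
open Filter MeasureTheory ENNReal Metric

/-- Moving-input stability (vector case): if `W n → W*` in probability, the
discontinuity set `D` of the `ℝ^d`-valued map `g` on `[w_min, w_max]` is null under
the law `μ` of `W*`, and `g n → g` uniformly on the complements
`[w_min, w_max] \ U j` of open sets `U j ⊇ D` with `μ (U j) < 1/j` and
`μ (∂ U j) = 0`, then `g n (W n) → g (W*)` in probability. -/
theorem moving_input_stability_vector
    {Ω : Type*} [MeasurableSpace Ω] (P : Measure Ω) [IsProbabilityMeasure P]
    (d : ℕ)
    (wmin wmax : ℝ) (hw : wmin < wmax)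
    (Wn : ℕ → Ω → ℝ) (hWn : ∀ n, Measurable (Wn n))
    (Wstar : Ω → ℝ) (hWstar : Measurable Wstar)
    (hWnmem : ∀ n, ∀ᵐ ω ∂P, Wn n ω ∈ Set.Icc wmin wmax)
    (hWsmem : ∀ᵐ ω ∂P, Wstar ω ∈ Set.Icc wmin wmax)
    (hconv : ∀ ε : ℝ, 0 < ε →
      Tendsto (fun n => P {ω | ε < |Wn n ω - Wstar ω|}) atTop (nhds 0))
    (g : ℝ → (Fin d → ℝ)) (hg : Measurable g)
    (D : Set ℝ)
    (hD : D = {w ∈ Set.Icc wmin wmax | ¬ ContinuousWithinAt g (Set.Icc wmin wmax) w})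
    (hDnull : P.map Wstar D = 0)
    (gn : ℕ → ℝ → (Fin d → ℝ)) (hgn : ∀ n, Measurable (gn n))
    (U : ℕ → Set ℝ)
    (hUopen : ∀ j, IsOpen (U j))
    (hUD : ∀ j, D ⊆ U j)
    (hUsmall : ∀ j : ℕ, P.map Wstar (U j) < 1 / ((j : ℝ≥0∞) + 1))
    (hUbd : ∀ j, P.map Wstar (frontier (U j)) = 0)
    (hunif : ∀ j, TendstoUniformlyOn gn g atTop (Set.Icc wmin wmax \ U j)) :
    ∀ ε : ℝ, 0 < ε →
      Tendsto (fun n => P {ω | ε < ‖gn n (Wn n ω) - g (Wstar ω)‖}) atTop (nhds 0) := by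
  intro ε hε
  set μ := P.map Wstar with hμ
  have hμprob : IsProbabilityMeasure μ := Measure.isProbabilityMeasure_map hWstar.aemeasurable
  rw [ENNReal.tendsto_nhds_zero]
  intro η hη
  have hη2 : 0 < η / 2 := ENNReal.half_pos (ne_of_gt hη)
  -- choose j with 1/(j+1) ≤ η/2
  obtain ⟨j, hj⟩ : ∃ j : ℕ, 1 / ((j : ℝ≥0∞) + 1) ≤ η / 2 := by
    obtain ⟨n, hn⟩ := ENNReal.exists_inv_nat_lt (ne_of_gt hη2)
    refine ⟨n, ?_⟩
    rw [one_div]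
    refine le_trans (le_trans (ENNReal.inv_le_inv.2 ?_) hn.le) le_rfl
    exact le_add_right le_rfl
  have hclos : μ (closure (U j)) < η / 2 := by
    have h1 : μ (closure (U j)) ≤ μ (U j) + μ (frontier (U j)) := by
      refine le_trans (measure_mono ?_) (measure_union_le _ _)
      intro x hx
      by_cases hx' : x ∈ U j
      · exact Or.inl hx'
      · exact Or.inr ⟨hx, fun h => hx' ((hUopen j).interior_eq ▸ h)⟩
    rw [hUbd j, add_zero] at h1
    exact lt_of_le_of_lt h1 (lt_of_lt_of_le (hUsmall j) hj)
  -- pick δ0 > 0 with μ (cthickening δ0 (U j)) < η/2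
  obtain ⟨δ0, hδ0pos, hδ0⟩ : ∃ δ0 > 0, μ (cthickening δ0 (U j)) < η / 2 := by
    have htend : Tendsto (fun r => μ (cthickening r (U j))) (nhds 0) (nhds (μ (closure (U j)))) :=
      tendsto_measure_cthickening ⟨1, one_pos, (measure_lt_top μ _).ne⟩
    have h2 : ∀ᶠ r in nhdsWithin 0 (Set.Ioi (0:ℝ)), μ (cthickening r (U j)) < η / 2 :=
      (htend.mono_left nhdsWithin_le_nhds).eventually (Filter.Tendsto.eventually_lt_const hclos tendsto_id) |>.mono (fun _ h => h)
    obtain ⟨r, hr1, hr2⟩ := (h2.and self_mem_nhdsWithin).exists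
    exact ⟨r, hr2, hr1⟩
  -- compact set K and uniform continuity
  set K := Set.Icc wmin wmax \ U j with hK
  have hKcomp : IsCompact K := (isCompact_Icc).diff (hUopen j)
  have hgK : ContinuousOn g K := by
    intro w hw'
    have hwD : w ∉ D := fun h => hw'.2 (hUD j h)
    have : ContinuousWithinAt g (Set.Icc wmin wmax) w := by
      by_contra hcon
      exact hwD (hD ▸ ⟨hw'.1, hcon⟩)
    exact this.mono Set.diff_subset
  obtain ⟨δ1, hδ1pos, hδ1⟩ := Metric.uniformContinuousOn_iff.mp
    (hKcomp.uniformContinuousOn_of_continuous hgK) (ε / 2) (by linarith)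
  set δ : ℝ := min δ0 δ1 / 2 with hδ
  have hδpos : 0 < δ := by positivity
  have hδle0 : δ ≤ δ0 := by
    have := min_le_left δ0 δ1; simp only [hδ]; linarith
  have hδlt1 : δ < δ1 := by
    have := min_le_right δ0 δ1; simp only [hδ]; linarith
  -- eventual facts
  have hEv1 : ∀ᶠ n in atTop, P {ω | δ < |Wn n ω - Wstar ω|} < η / 2 :=
    Filter.Tendsto.eventually_lt_const hη2 (hconv δ hδpos)
  have hEv2 : ∀ᶠ n in atTop, ∀ x ∈ K, dist (g x) (gn n x) < ε / 2 :=
    Metric.tendstoUniformlyOn_iff.mp (hunif j) (ε / 2) (by linarith)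
  filter_upwards [hEv1, hEv2] with n h1 h2
  -- inclusion of the bad event
  have hincl : P {ω | ε < ‖gn n (Wn n ω) - g (Wstar ω)‖} ≤
      P ({ω | Wstar ω ∈ cthickening δ0 (U j)} ∪ {ω | δ < |Wn n ω - Wstar ω|}) := by
    refine measure_mono_ae ?_
    filter_upwards [hWnmem n, hWsmem] with ω hωn hωs hωE
    by_contra hnot
    have hnot' : ¬(Wstar ω ∈ cthickening δ0 (U j) ∨ δ < |Wn n ω - Wstar ω|) := hnot
    push_neg at hnot'
    obtain ⟨hnotC, hnotδ⟩ := hnot'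
    -- Wstar ω ∉ U j
    have hWsU : Wstar ω ∉ U j := fun h =>
      hnotC (self_subset_cthickening _ h)
    have hWsK : Wstar ω ∈ K := ⟨hωs, hWsU⟩
    have hdist : dist (Wn n ω) (Wstar ω) ≤ δ := by
      rw [Real.dist_eq]; exact hnotδ
    have hWnU : Wn n ω ∉ U j := by
      intro h
      exact hnotC (mem_cthickening_of_dist_le (Wstar ω) (Wn n ω) δ0 (U j) h
        (by rw [dist_comm] at hdist; exact hdist.trans hδle0))
    have hWnK : Wn n ω ∈ K := ⟨hωn, hWnU⟩
    have hA : dist (g (Wn n ω)) (gn n (Wn n ω)) < ε / 2 := h2 _ hWnK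
    have hB : dist (g (Wn n ω)) (g (Wstar ω)) < ε / 2 :=
      hδ1 _ hWnK _ hWsK (lt_of_le_of_lt hdist hδlt1)
    have : ‖gn n (Wn n ω) - g (Wstar ω)‖ < ε := by
      rw [← dist_eq_norm]
      calc dist (gn n (Wn n ω)) (g (Wstar ω))
          ≤ dist (gn n (Wn n ω)) (g (Wn n ω)) + dist (g (Wn n ω)) (g (Wstar ω)) :=
            dist_triangle _ _ _
        _ < ε / 2 + ε / 2 := by rw [dist_comm (gn n (Wn n ω))]; exact add_lt_add hA hB
        _ = ε := by ring
    have hωE' : ε < ‖gn n (Wn n ω) - g (Wstar ω)‖ := hωE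
    linarith
  refine hincl.trans ?_
  refine le_trans (measure_union_le _ _) ?_
  have hB1 : P {ω | Wstar ω ∈ cthickening δ0 (U j)} ≤ η / 2 := by
    have : P {ω | Wstar ω ∈ cthickening δ0 (U j)} = μ (cthickening δ0 (U j)) := by
      rw [hμ, Measure.map_apply hWstar (isClosed_cthickening.measurableSet)]
      rfl
    rw [this]; exact hδ0.le
  calc P {ω | Wstar ω ∈ cthickening δ0 (U j)} + P {ω | δ < |Wn n ω - Wstar ω|}
      ≤ η / 2 + η / 2 := add_le_add hB1 h1.le
    _ = η := ENNReal.add_halves η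
end

section
/- Fix M ∈ ℕ, times t_0 < t_1 < ⋯ < t_M in [0,T], constants w_min < w_max, q_min ≤ q_max, an integer d_a ≥ 1, an initial value w_0 ∈ [w_min, w_max], and ℝ^{d_a}-valued random vectors Y_1, …, Y_M on a probability space. Let U_q : [0,T] × ℝ × ℝ → ℝ be continuous on [0,T] × [w_min, w_max] × [q_min, q_max], and let U_p : [0,T] × ℝ × ℝ^{d_a} × ℝ^{d_a} → ℝ be continuous on [0,T] × [w_min, w_max] × Z_p × { y : ‖y‖ ≤ r } for every r > 0. Let (q*, p*) and, for each n ∈ ℕ, (q_n, p_n) be Borel measurable policies on [0,T] × ℝ with q-values in Z_q(w) and p-values in Z_p pointwise. For any policy (q, p), define the controlled state sequence by W(t_0^-) = w_0, W(t_m^+) = U_q(t_m, W(t_m^-), q(t_m^-, W(t_m^-))) for m = 0,…,M, and W(t_{m+1}^-) = U_p(t_m, W(t_m^+), p(t_m^+, W(t_m^+)), Y_{m+1}) for m = 0,…,M−1; write W* for the state sequence under (q*, p*) and W^{(n)} for the state sequence under (q_n, p_n). Assume: (i) all states W*(t_m^±) and W^{(n)}(t_m^±) lie in [w_min, w_max]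 almost surely; (ii) for each m ∈ {0,…,M} and every sequence of random variables (V_n) with values in [w_min, w_max] a.s. and V_n → W*(t_m^-) in probability, one has q_n(t_m^-, V_n) → q*(t_m^-, W*(t_m^-)) in probability; (iii) for each m ∈ {0,…,M−1} and every sequence of random variables (V_n) with values in [w_min, w_max] a.s. and V_n → W*(t_m^+) in probability, one has p_n(t_m^+, V_n) → p*(t_m^+, W*(t_m^+)) in probability. Then W^{(n)}(t_m^-) → W*(t_m^-) in probability for all m = 0,…,M and W^{(n)}(t_m^+) → W*(t_m^+) in probability for all m = 0,…,M (including the terminal post-decision state at t_M). -/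
/-!
Convergence in probability propagates along the recursion
`W(t_m^-) ↦ W(t_m^+) ↦ W(t_{m+1}^-)`. Each new state is a continuous function of the previous
state, of the action taken there and (for the post-to-pre step) of the noise `Y_{m+1}`, which
is the same for both policies. Applying the stability hypotheses (ii), (iii) to a measurable
version of the previous state gives convergence of the actions, and the continuous mapping
theorem gives convergence of the next state. Since the update maps are only continuous on the
bounded state domain, the continuous mapping theorem is proved through a.e.-convergent
subsequences, where continuity within a set is enough.
-/

open Filter MeasureTheory

/-- The admissible pre-decision set `Z_q(w)`. -/
noncomputable def Zq (qmin qmax w : ℝ) : Set ℝ :=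
  if qmax ≤ w then Set.Icc qmin qmax
  else if qmin < w then Set.Icc qmin w
  else {qmin}

/-- The probability simplex `Z_p ⊆ ℝ^{d_a}`. -/
def Zp (da : ℕ) : Set (Fin da → ℝ) :=
  {z | (∀ i, 0 ≤ z i) ∧ ∑ i, z i = 1}

/-- The pre-decision state sequence `W(t_m^-)` of the controlled recursion induced
by a two-step policy `(q, p)`: `W(t_0^-) = w_0`,
`W(t_m^+) = U_q (t_m, W(t_m^-), q (t_m^-, W(t_m^-)))` and
`W(t_{m+1}^-) = U_p (t_m, W(t_m^+), p (t_m^+, W(t_m^+)), Y_{m+1})`. -/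
def Wminus {Ω : Type*} (da : ℕ)
    (Uq : ℝ → ℝ → ℝ → ℝ)
    (Up : ℝ → ℝ → (Fin da → ℝ) → (Fin da → ℝ) → ℝ)
    (t : ℕ → ℝ) (Y : ℕ → Ω → (Fin da → ℝ)) (w0 : ℝ)
    (q : ℝ → ℝ → ℝ) (p : ℝ → ℝ → (Fin da → ℝ)) : ℕ → Ω → ℝ
  | 0, _ => w0
  | m + 1, ω =>
      let wm := Wminus da Uq Up t Y w0 q p m ω
      let wp := Uq (t m) wm (q (t m) wm)
      Up (t m) wp (p (t m) wp) (Y (m + 1) ω)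

/-- The post-decision state `W(t_m^+)` of the controlled recursion. -/
def Wplus {Ω : Type*} (da : ℕ)
    (Uq : ℝ → ℝ → ℝ → ℝ)
    (Up : ℝ → ℝ → (Fin da → ℝ) → (Fin da → ℝ) → ℝ)
    (t : ℕ → ℝ) (Y : ℕ → Ω → (Fin da → ℝ)) (w0 : ℝ)
    (q : ℝ → ℝ → ℝ) (p : ℝ → ℝ → (Fin da → ℝ)) (m : ℕ) (ω : Ω) : ℝ :=
  let wm := Wminus da Uq Up t Y w0 q p m ω
  Uq (t m) wm (q (t m) wm)

open Set Topology

namespace MeasureTheory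

variable {Ω α β ι : Type*} {mΩ : MeasurableSpace Ω} {μ : Measure Ω}

theorem tendstoInMeasure_iff_measure_lt_norm [SeminormedAddCommGroup α] {l : Filter ι}
    {f : ι → Ω → α} {g : Ω → α} :
    TendstoInMeasure μ f l g ↔
      ∀ ε : ℝ, 0 < ε → Tendsto (fun i => μ {ω | ε < ‖f i ω - g ω‖}) l (𝓝 0) := by
  rw [tendstoInMeasure_iff_norm]
  refine ⟨fun h ε hε => ?_, fun h ε hε => ?_⟩
  · refine tendsto_of_tendsto_of_tendsto_of_le_of_le tendsto_const_nhds (h ε hε)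
      (fun _ => zero_le) fun i => measure_mono fun ω (hω : ε < _) => hω.le
  · refine tendsto_of_tendsto_of_tendsto_of_le_of_le tendsto_const_nhds (h (ε / 2) (half_pos hε))
      (fun _ => zero_le) fun i => measure_mono fun ω (hω : ε ≤ _) => ?_
    exact (half_lt_self hε).trans_le hω

theorem tendstoInMeasure_iff_measure_lt_abs {l : Filter ι} {f : ι → Ω → ℝ} {g : Ω → ℝ} :
    TendstoInMeasure μ f l g ↔
      ∀ ε : ℝ, 0 < ε → Tendsto (fun i => μ {ω | ε < |f i ω - g ω|}) l (𝓝 0) := by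
  rw [tendstoInMeasure_iff_measure_lt_norm]
  simp only [Real.norm_eq_abs]

theorem tendstoInMeasure_const [PseudoEMetricSpace α] {l : Filter ι} (g : Ω → α) :
    TendstoInMeasure μ (fun _ : ι => g) l g := fun ε hε => by
  simpa [hε.ne'] using tendsto_const_nhds

theorem TendstoInMeasure.prodMk [PseudoEMetricSpace α] [PseudoEMetricSpace β] {l : Filter ι}
    {f : ι → Ω → α} {g : Ω → α} {f' : ι → Ω → β} {g' : Ω → β}
    (hf : TendstoInMeasure μ f l g) (hf' : TendstoInMeasure μ f' l g') :
    TendstoInMeasure μ (fun i ω => (f i ω, f' i ω)) l (fun ω => (g ω, g' ω)) := fun ε hε => by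
  have hsum := (hf ε hε).add (hf' ε hε)
  rw [add_zero] at hsum
  refine tendsto_of_tendsto_of_tendsto_of_le_of_le tendsto_const_nhds hsum (fun _ => zero_le)
    fun i => (measure_mono fun ω hω => ?_).trans (measure_union_le _ _)
  simpa only [mem_ofPred_eq, Prod.edist_eq, le_max_iff, mem_union] using hω

theorem TendstoInMeasure.comp_continuousOn [IsFiniteMeasure μ] [PseudoEMetricSpace α]
    [PseudoEMetricSpace β] {f : α → β} {s : Set α} {X : ℕ → Ω → α} {X' : Ω → α}
    (hX : TendstoInMeasure μ X atTop X') (hf : ContinuousOn f s)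
    (hfX : ∀ n, AEStronglyMeasurable (fun ω => f (X n ω)) μ) (hXs : ∀ n, ∀ᵐ ω ∂μ, X n ω ∈ s)
    (hX's : ∀ᵐ ω ∂μ, X' ω ∈ s) :
    TendstoInMeasure μ (fun n ω => f (X n ω)) atTop (fun ω => f (X' ω)) := by
  -- along an a.e.-convergent sub-subsequence, continuity on `s` acts pointwise
  rw [exists_seq_tendstoInMeasure_atTop_iff hfX]
  intro ns hns
  obtain ⟨ns', hns', hae⟩ := (hX.comp hns.tendsto_atTop).exists_seq_tendsto_ae
  refine ⟨ns', hns', ?_⟩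
  filter_upwards [ae_all_iff.2 hXs, hX's, hae] with ω hXω hX'ω hlim
  exact (hf _ hX'ω).tendsto.comp
    (tendsto_nhdsWithin_iff.2 ⟨hlim, Eventually.of_forall fun i => hXω _⟩)

theorem TendstoInMeasure.comp_of_forall_measurable [MeasurableSpace α] [PseudoEMetricSpace α]
    [PseudoEMetricSpace β] {l : Filter ι} {s : Set α} {W : ι → Ω → α} {W' : Ω → α}
    {a : ι → α → β} {b : Ω → β}
    (ha : ∀ V : ι → Ω → α, (∀ i, Measurable (V i)) → (∀ i, ∀ᵐ ω ∂μ, V i ω ∈ s) →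
      TendstoInMeasure μ V l W' → TendstoInMeasure μ (fun i ω => a i (V i ω)) l b)
    (hW : ∀ i, AEMeasurable (W i) μ) (hWs : ∀ i, ∀ᵐ ω ∂μ, W i ω ∈ s)
    (h : TendstoInMeasure μ W l W') :
    TendstoInMeasure μ (fun i ω => a i (W i ω)) l b := by
  have hWV : ∀ i, W i =ᵐ[μ] (hW i).mk := fun i => (hW i).ae_eq_mk
  refine (ha _ (fun i => (hW i).measurable_mk) (fun i => ?_) (h.congr_left hWV)).congr_left
    fun i => ?_
  · filter_upwards [hWs i, hWV i] with ω hω hωV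
    exact hωV ▸ hω
  · filter_upwards [hWV i] with ω hω
    rw [hω]

end MeasureTheory

theorem ContinuousOn.comp_aemeasurable_of_ae_mem {Ω α β : Type*} {mΩ : MeasurableSpace Ω}
    {μ : Measure Ω} [TopologicalSpace α] [MeasurableSpace α] [OpensMeasurableSpace α]
    [TopologicalSpace β] [MeasurableSpace β] [BorelSpace β] {f : α → β} {s : Set α}
    {X : Ω → α} (hf : ContinuousOn f s) (hs : MeasurableSet s) (hX : AEMeasurable X μ)
    (hXs : ∀ᵐ ω ∂μ, X ω ∈ s) : AEMeasurable (fun ω => f (X ω)) μ := by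
  have hmap : (μ.map X).restrict s = μ.map X :=
    Measure.restrict_eq_self_of_ae_mem ((ae_map_iff hX hs).2 hXs)
  exact (hmap ▸ hf.aemeasurable hs).comp_aemeasurable hX

theorem continuousOn_prod_univ_of_forall_closedBall {α E β : Type*} [TopologicalSpace α]
    [SeminormedAddCommGroup E] [TopologicalSpace β] {f : α × E → β} {s : Set α}
    (h : ∀ r : ℝ, 0 < r → ContinuousOn f (s ×ˢ Metric.closedBall 0 r)) :
    ContinuousOn f (s ×ˢ univ) :=
  continuousOn_of_locally_continuousOn fun x _ =>
    ⟨{y | ‖y.2‖ < ‖x.2‖ + 1}, isOpen_lt (by fun_prop) continuous_const, by simp,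
      (h _ (by positivity)).mono fun y hy => ⟨hy.1.1, mem_closedBall_zero_iff.2 hy.2.le⟩⟩

theorem isClosed_Zp (da : ℕ) : IsClosed (Zp da) := by
  simp only [Zp, ofPred_and, ofPred_forall]
  exact (isClosed_iInter fun i => isClosed_le continuous_const (continuous_apply i)).inter
    (isClosed_eq (by fun_prop) continuous_const)

theorem Zq_subset_Icc {qmin qmax : ℝ} (hq : qmin ≤ qmax) (w : ℝ) :
    Zq qmin qmax w ⊆ Icc qmin qmax := by
  unfold Zq
  split_ifs with hmax hmin
  · exact subset_rfl
  · exact Icc_subset_Icc le_rfl (not_le.1 hmax).le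
  · exact singleton_subset_iff.2 (left_mem_Icc.2 hq)

section ControlledRecursion

variable {Ω : Type*} [MeasurableSpace Ω] {P : Measure Ω} {da : ℕ} {Uq : ℝ → ℝ → ℝ → ℝ}
  {Up : ℝ → ℝ → (Fin da → ℝ) → (Fin da → ℝ) → ℝ} {t : ℕ → ℝ} {Y : ℕ → Ω → (Fin da → ℝ)}
  {w0 : ℝ} {I Q : Set ℝ} {A : Set (Fin da → ℝ)}

theorem aemeasurable_Wminus_Wplus {M : ℕ} (hI : MeasurableSet I) (hQ : MeasurableSet Q)
    (hA : MeasurableSet A) (hY : ∀ m, Measurable (Y m)) {q : ℝ → ℝ → ℝ}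
    {p : ℝ → ℝ → (Fin da → ℝ)} (hq_meas : Measurable fun x : ℝ × ℝ => q x.1 x.2)
    (hp_meas : Measurable fun x : ℝ × ℝ => p x.1 x.2)
    (hq : ∀ m ≤ M, ∀ w, q (t m) w ∈ Q) (hp : ∀ m ≤ M, ∀ w, p (t m) w ∈ A)
    (hUq : ∀ m ≤ M, ContinuousOn (fun x : ℝ × ℝ => Uq (t m) x.1 x.2) (I ×ˢ Q))
    (hUp : ∀ m ≤ M, ContinuousOn
      (fun x : (ℝ × (Fin da → ℝ)) × (Fin da → ℝ) => Up (t m) x.1.1 x.1.2 x.2)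
      ((I ×ˢ A) ×ˢ univ))
    (hbdd : ∀ m ≤ M, ∀ᵐ ω ∂P,
      Wminus da Uq Up t Y w0 q p m ω ∈ I ∧ Wplus da Uq Up t Y w0 q p m ω ∈ I) :
    ∀ m ≤ M, AEMeasurable (Wminus da Uq Up t Y w0 q p m) P ∧
      AEMeasurable (Wplus da Uq Up t Y w0 q p m) P := by
  have hplus : ∀ m ≤ M, AEMeasurable (Wminus da Uq Up t Y w0 q p m) P →
      AEMeasurable (Wplus da Uq Up t Y w0 q p m) P := fun m hm hWm =>
    (hUq m hm).comp_aemeasurable_of_ae_mem (hI.prod hQ)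
      (hWm.prodMk ((hq_meas.comp measurable_prodMk_left).comp_aemeasurable hWm))
      ((hbdd m hm).mono fun ω hω => ⟨hω.1, hq m hm _⟩)
  intro m hm
  induction m with
  | zero => exact ⟨aemeasurable_const, hplus 0 hm aemeasurable_const⟩
  | succ m ih =>
    have hWp := (ih (by omega)).2
    have hWm : AEMeasurable (Wminus da Uq Up t Y w0 q p (m + 1)) P :=
      (hUp m (by omega)).comp_aemeasurable_of_ae_mem ((hI.prod hA).prod MeasurableSet.univ)
        ((hWp.prodMk ((hp_meas.comp measurable_prodMk_left).comp_aemeasurable hWp)).prodMk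
          (hY (m + 1)).aemeasurable)
        ((hbdd m (by omega)).mono fun ω hω => ⟨⟨hω.2, hp m (by omega) _⟩, trivial⟩)
    exact ⟨hWm, hplus _ hm hWm⟩

variable [IsFiniteMeasure P] {m : ℕ} {q : ℕ → ℝ → ℝ → ℝ} {p : ℕ → ℝ → ℝ → (Fin da → ℝ)}
  {q' : ℝ → ℝ → ℝ} {p' : ℝ → ℝ → (Fin da → ℝ)}

theorem tendstoInMeasure_Wplus
    (hUq : ContinuousOn (fun x : ℝ × ℝ => Uq (t m) x.1 x.2) (I ×ˢ Q))
    (hq : ∀ n w, q n (t m) w ∈ Q) (hq' : ∀ w, q' (t m) w ∈ Q)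
    (hWm : ∀ n, AEMeasurable (Wminus da Uq Up t Y w0 (q n) (p n) m) P)
    (hWp : ∀ n, AEMeasurable (Wplus da Uq Up t Y w0 (q n) (p n) m) P)
    (hI : ∀ n, ∀ᵐ ω ∂P, Wminus da Uq Up t Y w0 (q n) (p n) m ω ∈ I)
    (hI' : ∀ᵐ ω ∂P, Wminus da Uq Up t Y w0 q' p' m ω ∈ I)
    (hq_stable : ∀ V : ℕ → Ω → ℝ, (∀ n, Measurable (V n)) → (∀ n, ∀ᵐ ω ∂P, V n ω ∈ I) →
      TendstoInMeasure P V atTop (Wminus da Uq Up t Y w0 q' p' m) →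
      TendstoInMeasure P (fun n ω => q n (t m) (V n ω)) atTop
        (fun ω => q' (t m) (Wminus da Uq Up t Y w0 q' p' m ω)))
    (h : TendstoInMeasure P (fun n => Wminus da Uq Up t Y w0 (q n) (p n) m) atTop
      (Wminus da Uq Up t Y w0 q' p' m)) :
    TendstoInMeasure P (fun n => Wplus da Uq Up t Y w0 (q n) (p n) m) atTop
      (Wplus da Uq Up t Y w0 q' p' m) :=
  (h.prodMk (h.comp_of_forall_measurable hq_stable hWm hI)).comp_continuousOn hUq
    (fun n => (hWp n).aestronglyMeasurable) (fun n => (hI n).mono fun _ hω => ⟨hω, hq n _⟩)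
    (hI'.mono fun _ hω => ⟨hω, hq' _⟩)

theorem tendstoInMeasure_Wminus_succ
    (hUp : ContinuousOn
      (fun x : (ℝ × (Fin da → ℝ)) × (Fin da → ℝ) => Up (t m) x.1.1 x.1.2 x.2)
      ((I ×ˢ A) ×ˢ univ))
    (hp : ∀ n w, p n (t m) w ∈ A) (hp' : ∀ w, p' (t m) w ∈ A)
    (hWp : ∀ n, AEMeasurable (Wplus da Uq Up t Y w0 (q n) (p n) m) P)
    (hWm : ∀ n, AEMeasurable (Wminus da Uq Up t Y w0 (q n) (p n) (m + 1)) P)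
    (hI : ∀ n, ∀ᵐ ω ∂P, Wplus da Uq Up t Y w0 (q n) (p n) m ω ∈ I)
    (hI' : ∀ᵐ ω ∂P, Wplus da Uq Up t Y w0 q' p' m ω ∈ I)
    (hp_stable : ∀ V : ℕ → Ω → ℝ, (∀ n, Measurable (V n)) → (∀ n, ∀ᵐ ω ∂P, V n ω ∈ I) →
      TendstoInMeasure P V atTop (Wplus da Uq Up t Y w0 q' p' m) →
      TendstoInMeasure P (fun n ω => p n (t m) (V n ω)) atTop
        (fun ω => p' (t m) (Wplus da Uq Up t Y w0 q' p' m ω)))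
    (h : TendstoInMeasure P (fun n => Wplus da Uq Up t Y w0 (q n) (p n) m) atTop
      (Wplus da Uq Up t Y w0 q' p' m)) :
    TendstoInMeasure P (fun n => Wminus da Uq Up t Y w0 (q n) (p n) (m + 1)) atTop
      (Wminus da Uq Up t Y w0 q' p' (m + 1)) :=
  ((h.prodMk (h.comp_of_forall_measurable hp_stable hWp hI)).prodMk
    (tendstoInMeasure_const (Y (m + 1)))).comp_continuousOn hUp
    (fun n => (hWm n).aestronglyMeasurable)
    (fun n => (hI n).mono fun _ hω => ⟨⟨hω, hp n _⟩, trivial⟩)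
    (hI'.mono fun _ hω => ⟨⟨hω, hp' _⟩, trivial⟩)

end ControlledRecursion

theorem controlled_state_convergence_general
    {Ω : Type*} [MeasurableSpace Ω] (P : Measure Ω) [IsProbabilityMeasure P]
    (M : ℕ) (T : ℝ)
    (t : ℕ → ℝ)
    (ht_mem : ∀ m, m ≤ M → t m ∈ Set.Icc 0 T)
    (wmin wmax : ℝ)
    (qmin qmax : ℝ) (hq : qmin ≤ qmax)
    (da : ℕ)
    (w0 : ℝ)
    (Y : ℕ → Ω → (Fin da → ℝ)) (hY : ∀ m, Measurable (Y m))
    (Uq : ℝ → ℝ → ℝ → ℝ)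
    (hUq : ContinuousOn (fun x : ℝ × ℝ × ℝ => Uq x.1 x.2.1 x.2.2)
      (Set.Icc 0 T ×ˢ Set.Icc wmin wmax ×ˢ Set.Icc qmin qmax))
    (Up : ℝ → ℝ → (Fin da → ℝ) → (Fin da → ℝ) → ℝ)
    (hUp : ∀ r : ℝ, 0 < r →
      ContinuousOn (fun x : ℝ × ℝ × (Fin da → ℝ) × (Fin da → ℝ) =>
          Up x.1 x.2.1 x.2.2.1 x.2.2.2)
        (Set.Icc 0 T ×ˢ Set.Icc wmin wmax ×ˢ Zp da ×ˢ Metric.closedBall 0 r))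
    (qstar : ℝ → ℝ → ℝ) (pstar : ℝ → ℝ → (Fin da → ℝ))
    (hqstar_mem : ∀ s w : ℝ, s ∈ Set.Icc 0 T → qstar s w ∈ Zq qmin qmax w)
    (hpstar_mem : ∀ s w : ℝ, s ∈ Set.Icc 0 T → pstar s w ∈ Zp da)
    (qn : ℕ → ℝ → ℝ → ℝ) (pn : ℕ → ℝ → ℝ → (Fin da → ℝ))
    (hqn_meas : ∀ n, Measurable (fun x : ℝ × ℝ => qn n x.1 x.2))
    (hpn_meas : ∀ n, Measurable (fun x : ℝ × ℝ => pn n x.1 x.2))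
    (hqn_mem : ∀ n, ∀ s w : ℝ, s ∈ Set.Icc 0 T → qn n s w ∈ Zq qmin qmax w)
    (hpn_mem : ∀ n, ∀ s w : ℝ, s ∈ Set.Icc 0 T → pn n s w ∈ Zp da)
    -- (i) bounded state
    (hWstar_bdd : ∀ m, m ≤ M → (∀ᵐ ω ∂P,
      Wminus da Uq Up t Y w0 qstar pstar m ω ∈ Set.Icc wmin wmax ∧
      Wplus da Uq Up t Y w0 qstar pstar m ω ∈ Set.Icc wmin wmax))
    (hWn_bdd : ∀ n, ∀ m, m ≤ M → (∀ᵐ ω ∂P,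
      Wminus da Uq Up t Y w0 (qn n) (pn n) m ω ∈ Set.Icc wmin wmax ∧
      Wplus da Uq Up t Y w0 (qn n) (pn n) m ω ∈ Set.Icc wmin wmax))
    -- (ii) stability of the pre-decision actions at moving inputs
    (hq_stable : ∀ m, m ≤ M → ∀ V : ℕ → Ω → ℝ,
      (∀ n, Measurable (V n)) →
      (∀ n, ∀ᵐ ω ∂P, V n ω ∈ Set.Icc wmin wmax) →
      (∀ ε : ℝ, 0 < ε →
        Tendsto (fun n =>
            P {ω | ε < |V n ω - Wminus da Uq Up t Y w0 qstar pstar m ω|})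
          atTop (nhds 0)) →
      (∀ ε : ℝ, 0 < ε →
        Tendsto (fun n =>
            P {ω | ε < |qn n (t m) (V n ω) -
              qstar (t m) (Wminus da Uq Up t Y w0 qstar pstar m ω)|})
          atTop (nhds 0)))
    -- (iii) stability of the post-decision actions at moving inputs
    (hp_stable : ∀ m, m < M → ∀ V : ℕ → Ω → ℝ,
      (∀ n, Measurable (V n)) →
      (∀ n, ∀ᵐ ω ∂P, V n ω ∈ Set.Icc wmin wmax) →
      (∀ ε : ℝ, 0 < ε →
        Tendsto (fun n =>
            P {ω | ε < |V n ω - Wplus da Uq Up t Y w0 qstar pstar m ω|})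
          atTop (nhds 0)) →
      (∀ ε : ℝ, 0 < ε →
        Tendsto (fun n =>
            P {ω | ε < ‖pn n (t m) (V n ω) -
              pstar (t m) (Wplus da Uq Up t Y w0 qstar pstar m ω)‖})
          atTop (nhds 0))) :
    ∀ m, m ≤ M →
      (∀ ε : ℝ, 0 < ε →
        Tendsto (fun n =>
            P {ω | ε < |Wminus da Uq Up t Y w0 (qn n) (pn n) m ω -
              Wminus da Uq Up t Y w0 qstar pstar m ω|})
          atTop (nhds 0)) ∧
      (∀ ε : ℝ, 0 < ε →
        Tendsto (fun n =>
            P {ω | ε < |Wplus da Uq Up t Y w0 (qn n) (pn n) m ω -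
              Wplus da Uq Up t Y w0 qstar pstar m ω|})
          atTop (nhds 0)) := by
  simp only [← tendstoInMeasure_iff_measure_lt_abs, ← tendstoInMeasure_iff_measure_lt_norm]
    at hq_stable hp_stable ⊢
  have hUq_at : ∀ m ≤ M, ContinuousOn (fun x : ℝ × ℝ => Uq (t m) x.1 x.2)
      (Icc wmin wmax ×ˢ Icc qmin qmax) := fun m hm =>
    hUq.comp (by fun_prop : Continuous fun x : ℝ × ℝ => (t m, x)).continuousOn
      fun _ hx => ⟨ht_mem m hm, hx⟩
  have hUp_at : ∀ m ≤ M, ContinuousOn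
      (fun x : (ℝ × (Fin da → ℝ)) × (Fin da → ℝ) => Up (t m) x.1.1 x.1.2 x.2)
      ((Icc wmin wmax ×ˢ Zp da) ×ˢ univ) := fun m hm =>
    continuousOn_prod_univ_of_forall_closedBall fun r hr => (hUp r hr).comp
      (by fun_prop : Continuous fun x : (ℝ × (Fin da → ℝ)) × (Fin da → ℝ) =>
        (t m, x.1.1, x.1.2, x.2)).continuousOn
      fun _ hx => ⟨ht_mem m hm, hx.1.1, hx.1.2, hx.2⟩
  have hmeas n := aemeasurable_Wminus_Wplus (P := P) (w0 := w0) measurableSet_Icc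
    measurableSet_Icc (isClosed_Zp da).measurableSet hY (hqn_meas n) (hpn_meas n)
    (fun m hm w => Zq_subset_Icc hq w (hqn_mem n _ w (ht_mem m hm)))
    (fun m hm w => hpn_mem n _ w (ht_mem m hm)) hUq_at hUp_at (hWn_bdd n)
  have hplus : ∀ m ≤ M, _ → _ := fun m hm =>
    tendstoInMeasure_Wplus (hUq_at m hm)
      (fun n w => Zq_subset_Icc hq w (hqn_mem n _ w (ht_mem m hm)))
      (fun w => Zq_subset_Icc hq w (hqstar_mem _ w (ht_mem m hm)))
      (fun n => (hmeas n m hm).1) (fun n => (hmeas n m hm).2)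
      (fun n => (hWn_bdd n m hm).mono fun _ h => h.1) ((hWstar_bdd m hm).mono fun _ h => h.1)
      (hq_stable m hm)
  have hminus : ∀ m < M, _ → _ := fun m hm =>
    tendstoInMeasure_Wminus_succ (hUp_at m hm.le)
      (fun n w => hpn_mem n _ w (ht_mem m hm.le)) (fun w => hpstar_mem _ w (ht_mem m hm.le))
      (fun n => (hmeas n m hm.le).2) (fun n => (hmeas n (m + 1) hm).1)
      (fun n => (hWn_bdd n m hm.le).mono fun _ h => h.2)
      ((hWstar_bdd m hm.le).mono fun _ h => h.2) (hp_stable m hm)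
  intro m hm
  induction m with
  | zero => exact ⟨tendstoInMeasure_const _, hplus 0 hm (tendstoInMeasure_const _)⟩
  | succ m ih =>
    have hconv := hminus m hm (ih (by omega)).2
    exact ⟨hconv, hplus _ hm hconv⟩

/-- Convergence of the controlled state sequence: if the approximating policies
`(q n, p n)` track the optimal policy `(q*, p*)` at moving inputs converging in
probability (hypotheses (ii) and (iii)), the update maps are continuous on the
relevant bounded domains, and all states remain in `[w_min, w_max]` almost surely,
then the induced state sequence converges in probability to the optimal one at all
pre- and post-decision times. -/
theorem controlled_state_convergence
    {Ω : Type*} [MeasurableSpace Ω] (P : Measure Ω) [IsProbabilityMeasure P]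
    (M : ℕ) (T : ℝ) (hT : 0 < T)
    (t : ℕ → ℝ)
    (ht_mono : ∀ m, m < M → t m < t (m + 1))
    (ht_mem : ∀ m, m ≤ M → t m ∈ Set.Icc 0 T)
    (wmin wmax : ℝ) (hw : wmin < wmax)
    (qmin qmax : ℝ) (hq : qmin ≤ qmax)
    (da : ℕ) (hda : 1 ≤ da)
    (w0 : ℝ) (hw0 : w0 ∈ Set.Icc wmin wmax)
    (Y : ℕ → Ω → (Fin da → ℝ)) (hY : ∀ m, Measurable (Y m))
    (Uq : ℝ → ℝ → ℝ → ℝ)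
    (hUq : ContinuousOn (fun x : ℝ × ℝ × ℝ => Uq x.1 x.2.1 x.2.2)
      (Set.Icc 0 T ×ˢ Set.Icc wmin wmax ×ˢ Set.Icc qmin qmax))
    (Up : ℝ → ℝ → (Fin da → ℝ) → (Fin da → ℝ) → ℝ)
    (hUp : ∀ r : ℝ, 0 < r →
      ContinuousOn (fun x : ℝ × ℝ × (Fin da → ℝ) × (Fin da → ℝ) =>
          Up x.1 x.2.1 x.2.2.1 x.2.2.2)
        (Set.Icc 0 T ×ˢ Set.Icc wmin wmax ×ˢ Zp da ×ˢ Metric.closedBall 0 r))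
    (qstar : ℝ → ℝ → ℝ) (pstar : ℝ → ℝ → (Fin da → ℝ))
    (hqstar_meas : Measurable (fun x : ℝ × ℝ => qstar x.1 x.2))
    (hpstar_meas : Measurable (fun x : ℝ × ℝ => pstar x.1 x.2))
    (hqstar_mem : ∀ s w : ℝ, s ∈ Set.Icc 0 T → qstar s w ∈ Zq qmin qmax w)
    (hpstar_mem : ∀ s w : ℝ, s ∈ Set.Icc 0 T → pstar s w ∈ Zp da)
    (qn : ℕ → ℝ → ℝ → ℝ) (pn : ℕ → ℝ → ℝ → (Fin da → ℝ))
    (hqn_meas : ∀ n, Measurable (fun x : ℝ × ℝ => qn n x.1 x.2))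
    (hpn_meas : ∀ n, Measurable (fun x : ℝ × ℝ => pn n x.1 x.2))
    (hqn_mem : ∀ n, ∀ s w : ℝ, s ∈ Set.Icc 0 T → qn n s w ∈ Zq qmin qmax w)
    (hpn_mem : ∀ n, ∀ s w : ℝ, s ∈ Set.Icc 0 T → pn n s w ∈ Zp da)
    -- (i) bounded state
    (hWstar_bdd : ∀ m, m ≤ M → (∀ᵐ ω ∂P,
      Wminus da Uq Up t Y w0 qstar pstar m ω ∈ Set.Icc wmin wmax ∧
      Wplus da Uq Up t Y w0 qstar pstar m ω ∈ Set.Icc wmin wmax))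
    (hWn_bdd : ∀ n, ∀ m, m ≤ M → (∀ᵐ ω ∂P,
      Wminus da Uq Up t Y w0 (qn n) (pn n) m ω ∈ Set.Icc wmin wmax ∧
      Wplus da Uq Up t Y w0 (qn n) (pn n) m ω ∈ Set.Icc wmin wmax))
    -- (ii) stability of the pre-decision actions at moving inputs
    (hq_stable : ∀ m, m ≤ M → ∀ V : ℕ → Ω → ℝ,
      (∀ n, Measurable (V n)) →
      (∀ n, ∀ᵐ ω ∂P, V n ω ∈ Set.Icc wmin wmax) →
      (∀ ε : ℝ, 0 < ε →
        Tendsto (fun n =>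
            P {ω | ε < |V n ω - Wminus da Uq Up t Y w0 qstar pstar m ω|})
          atTop (nhds 0)) →
      (∀ ε : ℝ, 0 < ε →
        Tendsto (fun n =>
            P {ω | ε < |qn n (t m) (V n ω) -
              qstar (t m) (Wminus da Uq Up t Y w0 qstar pstar m ω)|})
          atTop (nhds 0)))
    -- (iii) stability of the post-decision actions at moving inputs
    (hp_stable : ∀ m, m < M → ∀ V : ℕ → Ω → ℝ,
      (∀ n, Measurable (V n)) →
      (∀ n, ∀ᵐ ω ∂P, V n ω ∈ Set.Icc wmin wmax) →
      (∀ ε : ℝ, 0 < ε →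
        Tendsto (fun n =>
            P {ω | ε < |V n ω - Wplus da Uq Up t Y w0 qstar pstar m ω|})
          atTop (nhds 0)) →
      (∀ ε : ℝ, 0 < ε →
        Tendsto (fun n =>
            P {ω | ε < ‖pn n (t m) (V n ω) -
              pstar (t m) (Wplus da Uq Up t Y w0 qstar pstar m ω)‖})
          atTop (nhds 0))) :
    ∀ m, m ≤ M →
      (∀ ε : ℝ, 0 < ε →
        Tendsto (fun n =>
            P {ω | ε < |Wminus da Uq Up t Y w0 (qn n) (pn n) m ω -
              Wminus da Uq Up t Y w0 qstar pstar m ω|})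
          atTop (nhds 0)) ∧
      (∀ ε : ℝ, 0 < ε →
        Tendsto (fun n =>
            P {ω | ε < |Wplus da Uq Up t Y w0 (qn n) (pn n) m ω -
              Wplus da Uq Up t Y w0 qstar pstar m ω|})
          atTop (nhds 0)) :=
  controlled_state_convergence_general P M T t ht_mem wmin wmax qmin qmax hq da w0 Y hY Uq hUq Up
    hUp qstar pstar hqstar_mem hpstar_mem qn pn hqn_meas hpn_meas hqn_mem hpn_mem hWstar_bdd hWn_bdd
    hq_stable hp_stable
end
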